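/- arXiv:2303.10263 — 4 statements merged into one kernel-verified Lean document; each statement's English description precedes it below -/
import Mathlib

section
/- If ε^(2) has mean zero, covariance σ²I, and is independent of w^(1), then E[(w^(2) - w*)(w^(2) - w*)^T] = μ² (H^(2)+μI)^{-1} E[(w^(1)-w*)(w^(1)-w*)^T] (H^(2)+μI)^{-1} + (σ²/n) (H^(2)+μI)^{-2} H^(2). -/
open Matrix MeasureTheory

/-- Second-stage error covariance: if `ε⁽²⁾` has mean zero, covariance `σ²I`, and is
independent of `w⁽¹⁾`, and
`w⁽²⁾ = (H⁽²⁾+μI)⁻¹ (H⁽²⁾ w* + (1/n) X⁽²⁾ᵀ ε⁽²⁾ + μ w⁽¹⁾)` with `μ > 0`, then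
`E[(w⁽²⁾-w*)(w⁽²⁾-w*)ᵀ]
  = μ² (H⁽²⁾+μI)⁻¹ E[(w⁽¹⁾-w*)(w⁽¹⁾-w*)ᵀ] (H⁽²⁾+μI)⁻¹ + (σ²/n) (H⁽²⁾+μI)⁻² H⁽²⁾`. -/
theorem stmt3 {d n : ℕ} {Ω : Type*} [MeasurableSpace Ω] (Pr : Measure Ω)
    [IsProbabilityMeasure Pr] (hn : 0 < n)
    (X2 : Matrix (Fin n) (Fin d) ℝ) (wstar : Fin d → ℝ) (σ2 μ : ℝ) (hμ : 0 < μ)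
    (H2 : Matrix (Fin d) (Fin d) ℝ) (hH2 : H2 = ((n : ℝ))⁻¹ • (X2ᵀ * X2))
    (ε2 : Ω → Fin n → ℝ) (w1 : Ω → Fin d → ℝ)
    (hmeasε : Measurable ε2) (hmeasw : Measurable w1)
    (hindep : ProbabilityTheory.IndepFun ε2 w1 Pr)
    (hmean : ∀ t, ∫ ω, ε2 ω t ∂Pr = 0)
    (hcov : ∀ s t, ∫ ω, ε2 ω s * ε2 ω t ∂Pr = if s = t then σ2 else 0)
    (hintε1 : ∀ t, Integrable (fun ω => ε2 ω t) Pr)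
    (hintε2 : ∀ s t, Integrable (fun ω => ε2 ω s * ε2 ω t) Pr)
    (hintw1 : ∀ i, Integrable (fun ω => w1 ω i) Pr)
    (hintw2 : ∀ i j, Integrable (fun ω => (w1 ω i - wstar i) * (w1 ω j - wstar j)) Pr)
    (hintx : ∀ i t, Integrable (fun ω => w1 ω i * ε2 ω t) Pr)
    (C : Matrix (Fin d) (Fin d) ℝ)
    (hC : ∀ i j, C i j = ∫ ω, (w1 ω i - wstar i) * (w1 ω j - wstar j) ∂Pr)
    (w2 : Ω → Fin d → ℝ)
    (hw2 : ∀ ω, w2 ω = (H2 + μ • 1)⁻¹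
      *ᵥ (H2 *ᵥ wstar + ((n : ℝ))⁻¹ • (X2ᵀ *ᵥ ε2 ω) + μ • w1 ω)) :
    ∀ i j, ∫ ω, (w2 ω i - wstar i) * (w2 ω j - wstar j) ∂Pr
      = (μ ^ 2 • ((H2 + μ • 1)⁻¹ * C * (H2 + μ • 1)⁻¹)
          + (σ2 / (n : ℝ)) • (((H2 + μ • 1)⁻¹ * (H2 + μ • 1)⁻¹) * H2)) i j := by
  intro i j
  have hn' : (n : ℝ) ≠ 0 := Nat.cast_ne_zero.mpr hn.ne'
  set B : Matrix (Fin d) (Fin d) ℝ := H2 + μ • 1 with hBdef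
  -- B is positive definite, hence invertible
  have hpd : B.PosDef := by
    refine posDef_iff_dotProduct_mulVec.mpr ⟨?_, fun x hx => ?_⟩
    · rw [IsHermitian, conjTranspose_eq_transpose_of_trivial, hBdef, transpose_add, transpose_smul,
        transpose_one, hH2, transpose_smul, transpose_mul, transpose_transpose]
    · have hsx : star x = x := by ext t; simp
      rw [hsx, hBdef, add_mulVec, dotProduct_add]
      have h1 : 0 ≤ x ⬝ᵥ (H2 *ᵥ x) := by
        rw [hH2, smul_mulVec, dotProduct_smul, ← mulVec_mulVec, dotProduct_mulVec,
          vecMul_transpose]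
        have : 0 ≤ (X2 *ᵥ x) ⬝ᵥ (X2 *ᵥ x) :=
          Finset.sum_nonneg fun s _ => mul_self_nonneg _
        exact smul_nonneg (by positivity) this
      have h2 : 0 < x ⬝ᵥ ((μ • (1 : Matrix (Fin d) (Fin d) ℝ)) *ᵥ x) := by
        rw [smul_mulVec, one_mulVec, dotProduct_smul]
        have hxx : 0 < x ⬝ᵥ x := by
          obtain ⟨t, ht⟩ := Function.ne_iff.mp hx
          exact Finset.sum_pos' (fun s _ => mul_self_nonneg _)
            ⟨t, Finset.mem_univ t, mul_self_pos.mpr ht⟩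
        exact smul_pos hμ hxx
      linarith
  have hdet : IsUnit B.det := hpd.isUnit.map Matrix.detMonoidHom
  have hAB : B⁻¹ * B = 1 := Matrix.nonsing_inv_mul B hdet
  have hBA : B * B⁻¹ = 1 := Matrix.mul_nonsing_inv B hdet
  have hH2symm : H2ᵀ = H2 := by
    rw [hH2, transpose_smul, transpose_mul, transpose_transpose]
  have hBsymm : Bᵀ = B := by
    rw [hBdef, transpose_add, transpose_smul, transpose_one, hH2symm]
  have hAsymm : (B⁻¹)ᵀ = B⁻¹ := by rw [Matrix.transpose_nonsing_inv, hBsymm]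
  have hAentry : ∀ a b, B⁻¹ a b = B⁻¹ b a := by
    intro a b
    conv_lhs => rw [← hAsymm]
    exact Matrix.transpose_apply _ a b
  -- B⁻¹ commutes with H2
  have hcommB : H2 * B = B * H2 := by
    rw [hBdef, mul_add, add_mul, Matrix.mul_smul, Matrix.smul_mul, mul_one, one_mul]
  have hcomm : B⁻¹ * H2 = H2 * B⁻¹ := by
    calc B⁻¹ * H2 = B⁻¹ * H2 * (B * B⁻¹) := by rw [hBA, mul_one]
    _ = B⁻¹ * (H2 * B) * B⁻¹ := by simp only [mul_assoc]
    _ = B⁻¹ * (B * H2) * B⁻¹ := by rw [hcommB]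
    _ = (B⁻¹ * B) * (H2 * B⁻¹) := by simp only [mul_assoc]
    _ = H2 * B⁻¹ := by rw [hAB, one_mul]
  -- the key random vectors
  set q : Ω → Fin d → ℝ := fun ω k => w1 ω k - wstar k with hq
  set v : Ω → Fin d → ℝ := fun ω k => ∑ s, X2 s k * ε2 ω s with hv
  set u : Ω → Fin d → ℝ := fun ω k => (n : ℝ)⁻¹ * v ω k + μ * q ω k with hu
  -- error decomposition
  have he : ∀ ω k, w2 ω k - wstar k = ∑ m, B⁻¹ k m * u ω m := by
    intro ω k
    have hws : wstar = B⁻¹ *ᵥ (B *ᵥ wstar) := by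
      rw [mulVec_mulVec, hAB, one_mulVec]
    have hBw : B *ᵥ wstar = H2 *ᵥ wstar + μ • wstar := by
      rw [hBdef, add_mulVec, smul_mulVec, one_mulVec]
    have : w2 ω k - wstar k = (B⁻¹ *ᵥ ((H2 *ᵥ wstar + ((n : ℝ))⁻¹ • (X2ᵀ *ᵥ ε2 ω) + μ • w1 ω)
        - (H2 *ᵥ wstar + μ • wstar))) k := by
      rw [hw2 ω, ← hBw, mulVec_sub, mulVec_mulVec, hAB, one_mulVec]
      simp [Pi.sub_apply]
    rw [this]
    have harg : (H2 *ᵥ wstar + ((n : ℝ))⁻¹ • (X2ᵀ *ᵥ ε2 ω) + μ • w1 ω)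
        - (H2 *ᵥ wstar + μ • wstar) = u ω := by
      funext m
      simp only [Pi.sub_apply, Pi.add_apply, Pi.smul_apply, smul_eq_mul, hu, hq, hv]
      have : (X2ᵀ *ᵥ ε2 ω) m = ∑ s, X2 s m * ε2 ω s := by
        simp [Matrix.mulVec, dotProduct, Matrix.transpose_apply]
      rw [this]; ring
    rw [harg]
    simp [Matrix.mulVec, dotProduct]
  -- integrability facts
  have hintq : ∀ k, Integrable (fun ω => q ω k) Pr := fun k =>
    (hintw1 k).sub (integrable_const _)
  have hintεq : ∀ s l, Integrable (fun ω => ε2 ω s * q ω l) Pr := by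
    intro s l
    have h1 : (fun ω => ε2 ω s * q ω l)
        = fun ω => w1 ω l * ε2 ω s - wstar l * ε2 ω s := by
      funext ω; simp only [hq]; ring
    rw [h1]
    exact (hintx l s).sub ((hintε1 s).const_mul _)
  have hintvq : ∀ k l, Integrable (fun ω => v ω k * q ω l) Pr := by
    intro k l
    have h1 : (fun ω => v ω k * q ω l) = fun ω => ∑ s, X2 s k * (ε2 ω s * q ω l) := by
      funext ω; simp only [hv, Finset.sum_mul]; exact Finset.sum_congr rfl fun s _ => by ring
    rw [h1]
    exact integrable_finset_sum _ fun s _ => (hintεq s l).const_mul _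
  have hintvv : ∀ k l, Integrable (fun ω => v ω k * v ω l) Pr := by
    intro k l
    have h1 : (fun ω => v ω k * v ω l)
        = fun ω => ∑ s, ∑ t, (X2 s k * X2 t l) * (ε2 ω s * ε2 ω t) := by
      funext ω; simp only [hv, Finset.sum_mul_sum]
      exact Finset.sum_congr rfl fun s _ => Finset.sum_congr rfl fun t _ => by ring
    rw [h1]
    exact integrable_finset_sum _ fun s _ =>
      integrable_finset_sum _ fun t _ => (hintε2 s t).const_mul _
  have hintuu : ∀ k l, Integrable (fun ω => u ω k * u ω l) Pr := by
    intro k l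
    have h1 : (fun ω => u ω k * u ω l)
        = fun ω => ((n : ℝ)⁻¹ * (n : ℝ)⁻¹) * (v ω k * v ω l)
            + (((n : ℝ)⁻¹ * μ) * (v ω k * q ω l)
            + (((n : ℝ)⁻¹ * μ) * (v ω l * q ω k) + (μ * μ) * (q ω k * q ω l))) := by
      funext ω; simp only [hu]; ring
    rw [h1]
    refine ((hintvv k l).const_mul _).add (((hintvq k l).const_mul _).add
      (((hintvq l k).const_mul _).add ((hintw2 k l).const_mul _)))
  -- integral facts
  have hεq0 : ∀ s l, ∫ ω, ε2 ω s * q ω l ∂Pr = 0 := by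
    intro s l
    have h1 : (fun ω => ε2 ω s * q ω l)
        = fun ω => ε2 ω s * w1 ω l - ε2 ω s * wstar l := by
      funext ω; simp only [hq]; ring
    have hiw : Integrable (fun ω => ε2 ω s * w1 ω l) Pr := by
      have : (fun ω => ε2 ω s * w1 ω l) = fun ω => w1 ω l * ε2 ω s := by
        funext ω; ring
      rw [this]; exact hintx l s
    have hind : ProbabilityTheory.IndepFun (fun ω => ε2 ω s) (fun ω => w1 ω l) Pr :=
      hindep.comp (measurable_pi_apply s) (measurable_pi_apply l)
    have hmul : ∫ ω, ε2 ω s * w1 ω l ∂Pr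
        = (∫ ω, ε2 ω s ∂Pr) * ∫ ω, w1 ω l ∂Pr :=
      hind.integral_mul_eq_mul_integral (hintε1 s).aestronglyMeasurable
        (hintw1 l).aestronglyMeasurable
    rw [h1, integral_sub hiw ((hintε1 s).mul_const _), hmul, hmean s,
      integral_mul_const, hmean s]
    ring
  have hvq0 : ∀ k l, ∫ ω, v ω k * q ω l ∂Pr = 0 := by
    intro k l
    have h1 : (fun ω => v ω k * q ω l) = fun ω => ∑ s, X2 s k * (ε2 ω s * q ω l) := by
      funext ω; simp only [hv, Finset.sum_mul]; exact Finset.sum_congr rfl fun s _ => by ring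
    rw [h1, integral_finset_sum _ fun s _ => (hintεq s l).const_mul _]
    simp only [integral_const_mul, hεq0, mul_zero, Finset.sum_const_zero]
  have hS : ∀ k l, H2 k l = (n : ℝ)⁻¹ * ∑ s, X2 s k * X2 s l := by
    intro k l
    rw [hH2]
    simp [Matrix.smul_apply, Matrix.mul_apply, Matrix.transpose_apply]
  have hvv : ∀ k l, ∫ ω, v ω k * v ω l ∂Pr = σ2 * ∑ s, X2 s k * X2 s l := by
    intro k l
    have h1 : (fun ω => v ω k * v ω l)
        = fun ω => ∑ s, ∑ t, (X2 s k * X2 t l) * (ε2 ω s * ε2 ω t) := by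
      funext ω; simp only [hv, Finset.sum_mul_sum]
      exact Finset.sum_congr rfl fun s _ => Finset.sum_congr rfl fun t _ => by ring
    rw [h1, integral_finset_sum _ fun s _ =>
      integrable_finset_sum _ fun t _ => (hintε2 s t).const_mul _]
    have h2 : ∀ s : Fin n, ∫ ω, ∑ t, (X2 s k * X2 t l) * (ε2 ω s * ε2 ω t) ∂Pr
        = σ2 * (X2 s k * X2 s l) := by
      intro s
      rw [integral_finset_sum _ fun t _ => (hintε2 s t).const_mul _]
      have h3 : ∀ t : Fin n, ∫ ω, (X2 s k * X2 t l) * (ε2 ω s * ε2 ω t) ∂Pr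
          = (X2 s k * X2 t l) * (if s = t then σ2 else 0) := by
        intro t; rw [integral_const_mul, hcov]
      simp only [h3, mul_ite, mul_zero]
      rw [Finset.sum_ite_eq]
      simp only [Finset.mem_univ, if_true]
      ring
    rw [Finset.sum_congr rfl fun s _ => h2 s, ← Finset.mul_sum]
  have huu : ∀ k l, ∫ ω, u ω k * u ω l ∂Pr
      = μ ^ 2 * C k l + (σ2 / (n : ℝ)) * H2 k l := by
    intro k l
    have h1 : (fun ω => u ω k * u ω l)
        = fun ω => ((n : ℝ)⁻¹ * (n : ℝ)⁻¹) * (v ω k * v ω l)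
            + (((n : ℝ)⁻¹ * μ) * (v ω k * q ω l)
            + (((n : ℝ)⁻¹ * μ) * (v ω l * q ω k) + (μ * μ) * (q ω k * q ω l))) := by
      funext ω; simp only [hu]; ring
    have i1 : Integrable (fun ω => ((n : ℝ)⁻¹ * (n : ℝ)⁻¹) * (v ω k * v ω l)) Pr :=
      (hintvv k l).const_mul _
    have i2 : Integrable (fun ω => ((n : ℝ)⁻¹ * μ) * (v ω k * q ω l)) Pr :=
      (hintvq k l).const_mul _
    have i3 : Integrable (fun ω => ((n : ℝ)⁻¹ * μ) * (v ω l * q ω k)) Pr :=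
      (hintvq l k).const_mul _
    have i4 : Integrable (fun ω => (μ * μ) * (q ω k * q ω l)) Pr :=
      (hintw2 k l).const_mul _
    have i34 : Integrable (fun ω => ((n : ℝ)⁻¹ * μ) * (v ω l * q ω k)
        + (μ * μ) * (q ω k * q ω l)) Pr := i3.add i4
    have i234 : Integrable (fun ω => ((n : ℝ)⁻¹ * μ) * (v ω k * q ω l)
        + (((n : ℝ)⁻¹ * μ) * (v ω l * q ω k) + (μ * μ) * (q ω k * q ω l))) Pr := i2.add i34
    rw [h1, integral_add i1 i234, integral_add i2 i34, integral_add i3 i4]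
    simp only [integral_const_mul, hvq0, hvv, mul_zero]
    rw [← hC k l, hS k l]
    field_simp
    ring
  -- main computation
  have hmain : ∫ ω, (w2 ω i - wstar i) * (w2 ω j - wstar j) ∂Pr
      = ∑ k, ∑ l, (B⁻¹ i k * B⁻¹ j l) * (μ ^ 2 * C k l + (σ2 / (n : ℝ)) * H2 k l) := by
    have h1 : (fun ω => (w2 ω i - wstar i) * (w2 ω j - wstar j))
        = fun ω => ∑ k, ∑ l, (B⁻¹ i k * B⁻¹ j l) * (u ω k * u ω l) := by
      funext ω
      rw [he ω i, he ω j, Finset.sum_mul_sum]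
      exact Finset.sum_congr rfl fun k _ => Finset.sum_congr rfl fun l _ => by ring
    rw [h1, integral_finset_sum _ fun k _ =>
      integrable_finset_sum _ fun l _ => (hintuu k l).const_mul _]
    refine Finset.sum_congr rfl fun k _ => ?_
    rw [integral_finset_sum _ fun l _ => (hintuu k l).const_mul _]
    refine Finset.sum_congr rfl fun l _ => ?_
    rw [integral_const_mul, huu]
  rw [hmain]
  -- now the matrix algebra on the RHS
  have hAAH : B⁻¹ * B⁻¹ * H2 = B⁻¹ * H2 * B⁻¹ := by
    rw [mul_assoc, hcomm, ← mul_assoc, hcomm]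
  have hRHS : (μ ^ 2 • (B⁻¹ * C * B⁻¹) + (σ2 / (n : ℝ)) • ((B⁻¹ * B⁻¹) * H2))
      = B⁻¹ * (μ ^ 2 • C + (σ2 / (n : ℝ)) • H2) * B⁻¹ := by
    rw [hAAH, mul_add, add_mul, Matrix.mul_smul, Matrix.mul_smul,
      Matrix.smul_mul, Matrix.smul_mul]
  rw [hRHS]
  have hentry : (B⁻¹ * (μ ^ 2 • C + (σ2 / (n : ℝ)) • H2) * B⁻¹) i j
      = ∑ k, ∑ l, B⁻¹ i k * (μ ^ 2 * C k l + (σ2 / (n : ℝ)) * H2 k l) * B⁻¹ l j := by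
    rw [Matrix.mul_apply]
    simp only [Matrix.mul_apply, Matrix.add_apply, Matrix.smul_apply, smul_eq_mul,
      Finset.sum_mul]
    rw [Finset.sum_comm]
  rw [hentry]
  refine Finset.sum_congr rfl fun k _ => Finset.sum_congr rfl fun l _ => ?_
  rw [hAentry j l]
  ring
end

section
/- Under commuting Gram matrices, the expected forgetting of ℓ₂-regularized continual learning equals (σ²/n) · tr{ I_K (H^(1) - H^(2) - 2μI) H^(2) (H^(2)+μI)^{-2} }, where I_K is the orthogonal projection onto the range of H^(1). -/
open Matrix MeasureTheory

/-- Uniqueness of the Moore–Penrose pseudoinverse. -/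
theorem stmt7_mp_unique {d : ℕ} (A B C : Matrix (Fin d) (Fin d) ℝ)
    (hB1 : A * B * A = A) (hB2 : B * A * B = B)
    (hB3 : (A * B)ᵀ = A * B) (hB4 : (B * A)ᵀ = B * A)
    (hC1 : A * C * A = A) (hC2 : C * A * C = C)
    (hC3 : (A * C)ᵀ = A * C) (hC4 : (C * A)ᵀ = C * A) : B = C := by
  have k1 : (A * C) * (A * B) = A * B := by rw [← Matrix.mul_assoc, hC1]
  have k2 : (A * B) * (A * C) = A * C := by rw [← Matrix.mul_assoc, hB1]
  have h1 : A * B = A * C := by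
    calc A * B = (A * C) * (A * B) := k1.symm
      _ = ((A * B)ᵀ * (A * C)ᵀ)ᵀ := by rw [← Matrix.transpose_mul, Matrix.transpose_transpose]
      _ = ((A * B) * (A * C))ᵀ := by rw [hB3, hC3]
      _ = (A * C)ᵀ := by rw [k2]
      _ = A * C := hC3
  have k1' : (B * A) * (C * A) = B * A := by
    rw [Matrix.mul_assoc B A (C * A), ← Matrix.mul_assoc A C A, hC1]
  have k2' : (C * A) * (B * A) = C * A := by
    rw [Matrix.mul_assoc C A (B * A), ← Matrix.mul_assoc A B A, hB1]
  have h2 : B * A = C * A := by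
    calc B * A = (B * A) * (C * A) := k1'.symm
      _ = ((C * A)ᵀ * (B * A)ᵀ)ᵀ := by rw [← Matrix.transpose_mul, Matrix.transpose_transpose]
      _ = ((C * A) * (B * A))ᵀ := by rw [hB4, hC4]
      _ = (C * A)ᵀ := by rw [k2']
      _ = C * A := hC4
  calc B = B * A * B := hB2.symm
    _ = C * A * B := by rw [h2]
    _ = C * (A * B) := Matrix.mul_assoc _ _ _
    _ = C * (A * C) := by rw [h1]
    _ = C := by rw [← Matrix.mul_assoc, hC2]

theorem stmt7_dot_expand {d n : ℕ} (M N : Matrix (Fin d) (Fin n) ℝ) (e f : Fin n → ℝ) :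
    (M *ᵥ e) ⬝ᵥ (N *ᵥ f) = ∑ s, ∑ t, (Mᵀ * N) s t * (e s * f t) := by
  have hpt : ∀ i, (M *ᵥ e) i * (N *ᵥ f) i = ∑ s, ∑ t, (M i s * N i t) * (e s * f t) := by
    intro i
    simp only [Matrix.mulVec, dotProduct]
    rw [Finset.sum_mul_sum]
    exact Finset.sum_congr rfl fun s _ => Finset.sum_congr rfl fun t _ => by ring
  calc (M *ᵥ e) ⬝ᵥ (N *ᵥ f) = ∑ i, ∑ s, ∑ t, (M i s * N i t) * (e s * f t) := by
        simp only [dotProduct]; exact Finset.sum_congr rfl fun i _ => hpt i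
    _ = ∑ s, ∑ i, ∑ t, (M i s * N i t) * (e s * f t) := Finset.sum_comm
    _ = ∑ s, ∑ t, ∑ i, (M i s * N i t) * (e s * f t) :=
        Finset.sum_congr rfl fun s _ => Finset.sum_comm
    _ = ∑ s, ∑ t, (Mᵀ * N) s t * (e s * f t) := by
        refine Finset.sum_congr rfl fun s _ => Finset.sum_congr rfl fun t _ => ?_
        rw [Matrix.mul_apply, Finset.sum_mul]
        exact Finset.sum_congr rfl fun i _ => by rw [Matrix.transpose_apply]

theorem stmt7_sq_sum_sub {m : ℕ} (a x : Fin m → ℝ) (s : ℝ) :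
    ∑ i, (a i - s * x i) ^ 2
      = (∑ i, (a i) ^ 2) - 2 * s * (∑ i, a i * x i) + s ^ 2 * (∑ i, (x i) ^ 2) := by
  have h : ∀ i, (a i - s * x i) ^ 2 = (a i) ^ 2 - (2 * s) * (a i * x i) + s ^ 2 * (x i) ^ 2 :=
    fun i => by ring
  simp_rw [h]
  rw [Finset.sum_add_distrib, Finset.sum_sub_distrib, ← Finset.mul_sum, ← Finset.mul_sum]

theorem stmt7_sq_sum_add {m : ℕ} (a x : Fin m → ℝ) (s : ℝ) :
    ∑ i, (a i + s * x i) ^ 2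
      = (∑ i, (a i) ^ 2) + 2 * s * (∑ i, a i * x i) + s ^ 2 * (∑ i, (x i) ^ 2) := by
  have h : ∀ i, (a i + s * x i) ^ 2 = (a i) ^ 2 + (2 * s) * (a i * x i) + s ^ 2 * (x i) ^ 2 :=
    fun i => by ring
  simp_rw [h]
  rw [Finset.sum_add_distrib, Finset.sum_add_distrib, ← Finset.mul_sum, ← Finset.mul_sum]

theorem stmt7_integral_bilin {n : ℕ} {Ω : Type*} [MeasurableSpace Ω] (Pr : Measure Ω)
    (C : Matrix (Fin n) (Fin n) ℝ) (e f : Ω → Fin n → ℝ) (V : Fin n → Fin n → ℝ)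
    (hint : ∀ s t, Integrable (fun ω => e ω s * f ω t) Pr)
    (hval : ∀ s t, ∫ ω, e ω s * f ω t ∂Pr = V s t) :
    (∫ ω, ∑ s, ∑ t, C s t * (e ω s * f ω t) ∂Pr) = ∑ s, ∑ t, C s t * V s t := by
  rw [integral_finset_sum _ (fun s _ =>
    integrable_finset_sum _ (fun t _ => (hint s t).const_mul (C s t)))]
  refine Finset.sum_congr rfl fun s _ => ?_
  rw [integral_finset_sum _ (fun t _ => (hint s t).const_mul (C s t))]
  refine Finset.sum_congr rfl fun t _ => ?_
  rw [MeasureTheory.integral_const_mul, hval]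

theorem stmt7_quad_key {d n : ℕ} (H : Matrix (Fin d) (Fin d) ℝ) (hHs : Hᵀ = H)
    (A B : Matrix (Fin d) (Fin n) ℝ) (c : Fin d → ℝ) (hc : H *ᵥ c = 0)
    (e f : Fin n → ℝ) :
    (A *ᵥ e + B *ᵥ f + c) ⬝ᵥ (H *ᵥ (A *ᵥ e + B *ᵥ f + c))
      = (∑ s, ∑ t, (Aᵀ * (H * A)) s t * (e s * e t))
      + (∑ s, ∑ t, (Aᵀ * (H * B)) s t * (e s * f t))
      + (∑ s, ∑ t, (Bᵀ * (H * A)) s t * (f s * e t))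
      + (∑ s, ∑ t, (Bᵀ * (H * B)) s t * (f s * f t)) := by
  have hcd : ∀ x : Fin d → ℝ, c ⬝ᵥ (H *ᵥ x) = 0 := fun x => by
    rw [Matrix.dotProduct_mulVec, ← Matrix.mulVec_transpose, hHs, hc, zero_dotProduct]
  have h1 : H *ᵥ (A *ᵥ e + B *ᵥ f + c) = (H * A) *ᵥ e + (H * B) *ᵥ f := by
    rw [Matrix.mulVec_add, Matrix.mulVec_add, hc, add_zero, Matrix.mulVec_mulVec,
      Matrix.mulVec_mulVec]
  rw [add_dotProduct, add_dotProduct, hcd, h1, dotProduct_add,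
    dotProduct_add, stmt7_dot_expand A (H * A) e e, stmt7_dot_expand A (H * B) e f,
    stmt7_dot_expand B (H * A) f e, stmt7_dot_expand B (H * B) f f]
  ring

theorem stmt7_quad_int {d n : ℕ} {Ω : Type*} [MeasurableSpace Ω] (Pr : Measure Ω) (σ2 : ℝ)
    (H : Matrix (Fin d) (Fin d) ℝ) (hHs : Hᵀ = H)
    (A B : Matrix (Fin d) (Fin n) ℝ) (c : Fin d → ℝ) (hc : H *ᵥ c = 0)
    (e f : Ω → Fin n → ℝ)
    (hiee : ∀ s t, Integrable (fun ω => e ω s * e ω t) Pr)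
    (hiff : ∀ s t, Integrable (fun ω => f ω s * f ω t) Pr)
    (hief : ∀ s t, Integrable (fun ω => e ω s * f ω t) Pr)
    (hife : ∀ s t, Integrable (fun ω => f ω s * e ω t) Pr)
    (hcovE : ∀ s t, ∫ ω, e ω s * e ω t ∂Pr = if s = t then σ2 else 0)
    (hcovF : ∀ s t, ∫ ω, f ω s * f ω t ∂Pr = if s = t then σ2 else 0)
    (hcEF : ∀ s t, ∫ ω, e ω s * f ω t ∂Pr = 0)
    (hcFE : ∀ s t, ∫ ω, f ω s * e ω t ∂Pr = 0) :
    Integrable (fun ω => (A *ᵥ e ω + B *ᵥ f ω + c) ⬝ᵥ (H *ᵥ (A *ᵥ e ω + B *ᵥ f ω + c))) Pr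
    ∧ (∫ ω, (A *ᵥ e ω + B *ᵥ f ω + c) ⬝ᵥ (H *ᵥ (A *ᵥ e ω + B *ᵥ f ω + c)) ∂Pr)
        = σ2 * Matrix.trace (Aᵀ * (H * A)) + σ2 * Matrix.trace (Bᵀ * (H * B)) := by
  have key := fun ω => stmt7_quad_key H hHs A B c hc (e ω) (f ω)
  have I1 : Integrable (fun ω => ∑ s, ∑ t, (Aᵀ * (H * A)) s t * (e ω s * e ω t)) Pr :=
    integrable_finset_sum _ fun s _ =>
      integrable_finset_sum _ fun t _ => (hiee s t).const_mul _
  have I2 : Integrable (fun ω => ∑ s, ∑ t, (Aᵀ * (H * B)) s t * (e ω s * f ω t)) Pr :=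
    integrable_finset_sum _ fun s _ =>
      integrable_finset_sum _ fun t _ => (hief s t).const_mul _
  have I3 : Integrable (fun ω => ∑ s, ∑ t, (Bᵀ * (H * A)) s t * (f ω s * e ω t)) Pr :=
    integrable_finset_sum _ fun s _ =>
      integrable_finset_sum _ fun t _ => (hife s t).const_mul _
  have I4 : Integrable (fun ω => ∑ s, ∑ t, (Bᵀ * (H * B)) s t * (f ω s * f ω t)) Pr :=
    integrable_finset_sum _ fun s _ =>
      integrable_finset_sum _ fun t _ => (hiff s t).const_mul _
  have htr : ∀ C : Matrix (Fin n) (Fin n) ℝ,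
      (∑ s, ∑ t, C s t * (if s = t then σ2 else 0)) = σ2 * Matrix.trace C := by
    intro C
    simp only [mul_ite, mul_zero, Finset.sum_ite_eq, Finset.mem_univ, if_true]
    rw [Matrix.trace, Finset.mul_sum]
    exact Finset.sum_congr rfl fun s _ => by rw [Matrix.diag_apply]; ring
  have hfuneq : (fun ω => (A *ᵥ e ω + B *ᵥ f ω + c) ⬝ᵥ (H *ᵥ (A *ᵥ e ω + B *ᵥ f ω + c)))
      = fun ω => (∑ s, ∑ t, (Aᵀ * (H * A)) s t * (e ω s * e ω t))
      + (∑ s, ∑ t, (Aᵀ * (H * B)) s t * (e ω s * f ω t))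
      + (∑ s, ∑ t, (Bᵀ * (H * A)) s t * (f ω s * e ω t))
      + (∑ s, ∑ t, (Bᵀ * (H * B)) s t * (f ω s * f ω t)) := funext key
  constructor
  · rw [hfuneq]; exact ((I1.add I2).add I3).add I4
  · have I12 : Integrable (fun ω => (∑ s, ∑ t, (Aᵀ * (H * A)) s t * (e ω s * e ω t))
        + (∑ s, ∑ t, (Aᵀ * (H * B)) s t * (e ω s * f ω t))) Pr := I1.add I2
    have I123 : Integrable (fun ω => (∑ s, ∑ t, (Aᵀ * (H * A)) s t * (e ω s * e ω t))
        + (∑ s, ∑ t, (Aᵀ * (H * B)) s t * (e ω s * f ω t))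
        + (∑ s, ∑ t, (Bᵀ * (H * A)) s t * (f ω s * e ω t))) Pr := I12.add I3
    rw [show (∫ ω, (A *ᵥ e ω + B *ᵥ f ω + c) ⬝ᵥ (H *ᵥ (A *ᵥ e ω + B *ᵥ f ω + c)) ∂Pr)
        = ∫ ω, ((∑ s, ∑ t, (Aᵀ * (H * A)) s t * (e ω s * e ω t))
          + (∑ s, ∑ t, (Aᵀ * (H * B)) s t * (e ω s * f ω t))
          + (∑ s, ∑ t, (Bᵀ * (H * A)) s t * (f ω s * e ω t))
          + (∑ s, ∑ t, (Bᵀ * (H * B)) s t * (f ω s * f ω t))) ∂Pr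
      from integral_congr_ae (Filter.Eventually.of_forall key)]
    rw [integral_add I123 I4, integral_add I12 I3, integral_add I1 I2]
    rw [stmt7_integral_bilin Pr _ e e _ hiee hcovE,
      stmt7_integral_bilin Pr _ e f _ hief hcEF,
      stmt7_integral_bilin Pr _ f e _ hife hcFE,
      stmt7_integral_bilin Pr _ f f _ hiff hcovF]
    rw [htr, htr]
    simp

theorem stmt7_trace_sandwich {d n : ℕ} (U : Matrix (Fin d) (Fin n) ℝ)
    (W : Matrix (Fin d) (Fin d) ℝ) :
    Matrix.trace (Uᵀ * (W * U)) = Matrix.trace (W * (U * Uᵀ)) := by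
  rw [Matrix.trace_mul_comm, Matrix.mul_assoc]

set_option maxHeartbeats 1000000 in
/-- Expected forgetting of ℓ₂-regularized continual learning under commuting Gram matrices:
with `w⁽¹⁾` the OLS estimator on task 1, `w⁽²⁾` the μ-regularized minimizer on task 2,
`R₁(w) = (w-w*)ᵀ H⁽¹⁾ (w-w*) + σ²`, and `I_K = (H⁽¹⁾)† H⁽¹⁾` the orthogonal projection
onto `range(H⁽¹⁾)`,
`E[R₁(w⁽²⁾) - R₁(w⁽¹⁾)] = (σ²/n) · tr{I_K (H⁽¹⁾ - H⁽²⁾ - 2μI) H⁽²⁾ (H⁽²⁾+μI)⁻²}`. -/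
theorem stmt7 {d n : ℕ} {Ω : Type*} [MeasurableSpace Ω] (Pr : Measure Ω)
    [IsProbabilityMeasure Pr] (hn : 0 < n)
    (X1 X2 : Matrix (Fin n) (Fin d) ℝ) (wstar : Fin d → ℝ) (σ2 μ : ℝ) (hμ : 0 < μ)
    (H1 H2 : Matrix (Fin d) (Fin d) ℝ)
    (hH1 : H1 = ((n : ℝ))⁻¹ • (X1ᵀ * X1)) (hH2 : H2 = ((n : ℝ))⁻¹ • (X2ᵀ * X2))
    (hcomm : H1 * H2 = H2 * H1)
    -- independent, mean-zero, covariance `σ² I` noises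
    (ε1 ε2 : Ω → Fin n → ℝ)
    (hindep : ProbabilityTheory.IndepFun ε1 ε2 Pr)
    (hmean1 : ∀ t, ∫ ω, ε1 ω t ∂Pr = 0) (hmean2 : ∀ t, ∫ ω, ε2 ω t ∂Pr = 0)
    (hcov1 : ∀ s t, ∫ ω, ε1 ω s * ε1 ω t ∂Pr = if s = t then σ2 else 0)
    (hcov2 : ∀ s t, ∫ ω, ε2 ω s * ε2 ω t ∂Pr = if s = t then σ2 else 0)
    (hint11 : ∀ t, Integrable (fun ω => ε1 ω t) Pr)
    (hint12 : ∀ t, Integrable (fun ω => ε2 ω t) Pr)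
    (hint21 : ∀ s t, Integrable (fun ω => ε1 ω s * ε1 ω t) Pr)
    (hint22 : ∀ s t, Integrable (fun ω => ε2 ω s * ε2 ω t) Pr)
    (hint2x : ∀ s t, Integrable (fun ω => ε1 ω s * ε2 ω t) Pr)
    -- labels
    (y1 y2 : Ω → Fin n → ℝ)
    (hy1 : ∀ ω, y1 ω = X1 *ᵥ wstar + ε1 ω) (hy2 : ∀ ω, y2 ω = X2 *ᵥ wstar + ε2 ω)
    -- `G1d` is the Moore–Penrose pseudoinverse of `G1 = X1ᵀX1`; `w⁽¹⁾` is OLS on task 1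
    (G1 G1d : Matrix (Fin d) (Fin d) ℝ) (hG1 : G1 = X1ᵀ * X1)
    (hmpG1 : G1 * G1d * G1 = G1) (hmpG2 : G1d * G1 * G1d = G1d)
    (hmpG3 : (G1 * G1d)ᵀ = G1 * G1d) (hmpG4 : (G1d * G1)ᵀ = G1d * G1)
    (w1 : Ω → Fin d → ℝ) (hw1 : ∀ ω, w1 ω = G1d *ᵥ (X1ᵀ *ᵥ y1 ω))
    -- `w⁽²⁾` minimizes `(1/n)‖y⁽²⁾ - X⁽²⁾w‖² + μ‖w - w⁽¹⁾‖²`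
    (w2 : Ω → Fin d → ℝ)
    (hw2 : ∀ ω, ∀ w : Fin d → ℝ,
      ((n : ℝ))⁻¹ * ∑ t, (y2 ω t - (X2 *ᵥ w2 ω) t) ^ 2 + μ * ∑ i, (w2 ω i - w1 ω i) ^ 2
        ≤ ((n : ℝ))⁻¹ * ∑ t, (y2 ω t - (X2 *ᵥ w) t) ^ 2 + μ * ∑ i, (w i - w1 ω i) ^ 2)
    -- `H1d` is the Moore–Penrose pseudoinverse of `H⁽¹⁾`, `I_K = H1d * H1`
    (H1d IK : Matrix (Fin d) (Fin d) ℝ)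
    (hmpH1 : H1 * H1d * H1 = H1) (hmpH2 : H1d * H1 * H1d = H1d)
    (hmpH3 : (H1 * H1d)ᵀ = H1 * H1d) (hmpH4 : (H1d * H1)ᵀ = H1d * H1)
    (hIK : IK = H1d * H1)
    -- task-1 risk
    (R1 : (Fin d → ℝ) → ℝ)
    (hR1 : ∀ w, R1 w = (w - wstar) ⬝ᵥ (H1 *ᵥ (w - wstar)) + σ2) :
    ∫ ω, (R1 (w2 ω) - R1 (w1 ω)) ∂Pr
      = σ2 / (n : ℝ)
        * trace (IK * (H1 - H2 - (2 * μ) • 1) * H2 * ((H2 + μ • 1)⁻¹ * (H2 + μ • 1)⁻¹)) := by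
  have hn0 : (n : ℝ) ≠ 0 := Nat.cast_ne_zero.mpr hn.ne'
  -- basic symmetry facts
  have hH1s : H1ᵀ = H1 := by
    rw [hH1, Matrix.transpose_smul, Matrix.transpose_mul, Matrix.transpose_transpose]
  have hH2s : H2ᵀ = H2 := by
    rw [hH2, Matrix.transpose_smul, Matrix.transpose_mul, Matrix.transpose_transpose]
  have hG1s : G1ᵀ = G1 := by
    rw [hG1, Matrix.transpose_mul, Matrix.transpose_transpose]
  have hH1G : H1 = (n : ℝ)⁻¹ • G1 := by rw [hH1, hG1]
  -- `G1d` is symmetric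
  have e1 : G1 * G1dᵀ = G1d * G1 := by
    calc G1 * G1dᵀ = (G1d * G1ᵀ)ᵀ := by
          rw [Matrix.transpose_mul, Matrix.transpose_transpose]
      _ = (G1d * G1)ᵀ := by rw [hG1s]
      _ = G1d * G1 := hmpG4
  have e2 : G1dᵀ * G1 = G1 * G1d := by
    calc G1dᵀ * G1 = (G1ᵀ * G1d)ᵀ := by
          rw [Matrix.transpose_mul, Matrix.transpose_transpose]
      _ = (G1 * G1d)ᵀ := by rw [hG1s]
      _ = G1 * G1d := hmpG3
  have hb1 : G1 * G1dᵀ * G1 = G1 := by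
    have h := congrArg Matrix.transpose hmpG1
    rw [Matrix.transpose_mul, Matrix.transpose_mul, hG1s] at h
    rw [Matrix.mul_assoc]; exact h
  have hb2 : G1dᵀ * G1 * G1dᵀ = G1dᵀ := by
    have h := congrArg Matrix.transpose hmpG2
    rw [Matrix.transpose_mul, Matrix.transpose_mul, hG1s] at h
    rw [Matrix.mul_assoc]; exact h
  have hb3 : (G1 * G1dᵀ)ᵀ = G1 * G1dᵀ := by rw [e1, hmpG4]
  have hb4 : (G1dᵀ * G1)ᵀ = G1dᵀ * G1 := by rw [e2, hmpG3]
  have hG1ds : G1dᵀ = G1d := stmt7_mp_unique G1 G1dᵀ G1d hb1 hb2 hb3 hb4 hmpG1 hmpG2 hmpG3 hmpG4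
  -- `H1d = n • G1d`
  have hc1 : H1 * ((n : ℝ) • G1d) * H1 = H1 := by
    rw [hH1G]
    simp only [Matrix.smul_mul, Matrix.mul_smul, smul_smul]
    rw [hmpG1]
    congr 1
    field_simp
  have hc2 : ((n : ℝ) • G1d) * H1 * ((n : ℝ) • G1d) = (n : ℝ) • G1d := by
    rw [hH1G]
    simp only [Matrix.smul_mul, Matrix.mul_smul, smul_smul]
    rw [hmpG2]
    congr 1
    field_simp
  have hc3 : (H1 * ((n : ℝ) • G1d))ᵀ = H1 * ((n : ℝ) • G1d) := by
    rw [hH1G]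
    simp only [Matrix.smul_mul, Matrix.mul_smul, smul_smul, Matrix.transpose_smul]
    rw [hmpG3]
  have hc4 : (((n : ℝ) • G1d) * H1)ᵀ = ((n : ℝ) • G1d) * H1 := by
    rw [hH1G]
    simp only [Matrix.smul_mul, Matrix.mul_smul, smul_smul, Matrix.transpose_smul]
    rw [hmpG4]
  have hH1dn : H1d = (n : ℝ) • G1d :=
    stmt7_mp_unique H1 H1d ((n : ℝ) • G1d) hmpH1 hmpH2 hmpH3 hmpH4 hc1 hc2 hc3 hc4
  have hG1dH : G1d = (n : ℝ)⁻¹ • H1d := by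
    rw [hH1dn, smul_smul, inv_mul_cancel₀ hn0, one_smul]
  -- `IK * H1 = H1`
  have hIKH1 : IK * H1 = H1 := by
    rw [hIK]
    have h : ((H1d * H1) * H1)ᵀ = H1 := by
      rw [Matrix.transpose_mul, hmpH4, hH1s, ← Matrix.mul_assoc, hmpH1]
    calc (H1d * H1) * H1 = (((H1d * H1) * H1)ᵀ)ᵀ := (Matrix.transpose_transpose _).symm
      _ = H1ᵀ := by rw [h]
      _ = H1 := hH1s
  -- invertibility of `E = H2 + μ • 1`
  set E : Matrix (Fin d) (Fin d) ℝ := H2 + μ • 1 with hEdef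
  have hEs : Eᵀ = E := by
    rw [hEdef, Matrix.transpose_add, Matrix.transpose_smul, Matrix.transpose_one, hH2s]
  have hquadE : ∀ x : Fin d → ℝ,
      x ⬝ᵥ (E *ᵥ x) = (n : ℝ)⁻¹ * ((X2 *ᵥ x) ⬝ᵥ (X2 *ᵥ x)) + μ * (x ⬝ᵥ x) := by
    intro x
    rw [hEdef, Matrix.add_mulVec, dotProduct_add, Matrix.smul_mulVec,
      Matrix.one_mulVec, dotProduct_smul, smul_eq_mul, hH2,
      Matrix.smul_mulVec, dotProduct_smul, smul_eq_mul,
      ← Matrix.mulVec_mulVec, Matrix.dotProduct_mulVec, Matrix.vecMul_transpose]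
  have hdetE : IsUnit E.det := by
    have hinj : Function.Injective E.mulVec := by
      intro a b hab
      have h0 : E *ᵥ (a - b) = 0 := by rw [Matrix.mulVec_sub, hab, sub_self]
      have hq := hquadE (a - b)
      rw [h0, dotProduct_zero] at hq
      have hq1 : 0 ≤ (X2 *ᵥ (a - b)) ⬝ᵥ (X2 *ᵥ (a - b)) :=
        Finset.sum_nonneg fun i _ => mul_self_nonneg _
      have hq2 : 0 ≤ (a - b) ⬝ᵥ (a - b) :=
        Finset.sum_nonneg fun i _ => mul_self_nonneg _
      have hninv : (0:ℝ) ≤ (n : ℝ)⁻¹ := by positivity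
      have hz : (a - b) ⬝ᵥ (a - b) = 0 := by nlinarith [mul_nonneg hninv hq1]
      have hzi : ∀ i, (a - b) i * (a - b) i = 0 := fun i =>
        (Finset.sum_eq_zero_iff_of_nonneg (fun j _ => mul_self_nonneg ((a - b) j))).mp
          hz i (Finset.mem_univ i)
      have : a - b = 0 := funext fun i => mul_self_eq_zero.mp (hzi i)
      exact sub_eq_zero.mp this
    exact (Matrix.isUnit_iff_isUnit_det E).mp (Matrix.mulVec_injective_iff_isUnit.mp hinj)
  set P : Matrix (Fin d) (Fin d) ℝ := E⁻¹ with hPdef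
  have hEP : E * P = 1 := Matrix.mul_nonsing_inv E hdetE
  have hPE : P * E = 1 := Matrix.nonsing_inv_mul E hdetE
  have hPs : Pᵀ = P := by rw [hPdef, Matrix.transpose_nonsing_inv, hEs]
  have hcommE : ∀ M : Matrix (Fin d) (Fin d) ℝ, M * E = E * M → P * M = M * P := by
    intro M h
    calc P * M = P * M * (E * P) := by rw [hEP, Matrix.mul_one]
      _ = P * ((M * E) * P) := by
          rw [Matrix.mul_assoc P M (E * P), ← Matrix.mul_assoc M E P]
      _ = P * ((E * M) * P) := by rw [h]
      _ = (P * E) * (M * P) := by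
          rw [Matrix.mul_assoc E M P, ← Matrix.mul_assoc P E (M * P)]
      _ = M * P := by rw [hPE, Matrix.one_mul]
  have hE1comm : H1 * E = E * H1 := by
    rw [hEdef]
    simp only [Matrix.mul_add, Matrix.add_mul, Matrix.mul_smul, Matrix.smul_mul,
      Matrix.mul_one, Matrix.one_mul, hcomm]
  have hE2comm : H2 * E = E * H2 := by
    rw [hEdef]
    simp only [Matrix.mul_add, Matrix.add_mul, Matrix.mul_smul, Matrix.smul_mul,
      Matrix.mul_one, Matrix.one_mul]
  have hPH1 : P * H1 = H1 * P := hcommE H1 hE1comm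
  have hPH2 : P * H2 = H2 * P := hcommE H2 hE2comm
  -- normal equation for w2
  have hH2v : ∀ x : Fin d → ℝ, (n : ℝ)⁻¹ • ((X2ᵀ * X2) *ᵥ x) = H2 *ᵥ x := by
    intro x; rw [hH2, Matrix.smul_mulVec]
  have hNE : ∀ ω, E *ᵥ (w2 ω - wstar)
      = (n : ℝ)⁻¹ • (X2ᵀ *ᵥ ε2 ω) + μ • (w1 ω - wstar) := by
    intro ω
    set r : Fin n → ℝ := fun t => y2 ω t - (X2 *ᵥ w2 ω) t with hrdef
    set g : Fin d → ℝ := μ • (w2 ω - w1 ω) - (n : ℝ)⁻¹ • (X2ᵀ *ᵥ r) with hgdef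
    set D1 : ℝ := ∑ t, r t * ((X2 *ᵥ g) t) with hD1def
    set D2 : ℝ := ∑ i, (w2 ω i - w1 ω i) * g i with hD2def
    set Q1 : ℝ := ∑ t, ((X2 *ᵥ g) t) ^ 2 with hQ1def
    set Q2 : ℝ := ∑ i, (g i) ^ 2 with hQ2def
    have hkey : ∀ s : ℝ, 0 ≤ 2 * s * (μ * D2 - (n : ℝ)⁻¹ * D1)
        + s ^ 2 * ((n : ℝ)⁻¹ * Q1 + μ * Q2) := by
      intro s
      have h := hw2 ω (w2 ω + s • g)
      have hx : X2 *ᵥ (w2 ω + s • g) = X2 *ᵥ w2 ω + s • (X2 *ᵥ g) := by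
        rw [Matrix.mulVec_add, Matrix.mulVec_smul]
      have E1 : ∑ t, (y2 ω t - (X2 *ᵥ (w2 ω + s • g)) t) ^ 2
          = (∑ t, (y2 ω t - (X2 *ᵥ w2 ω) t) ^ 2) - 2 * s * D1 + s ^ 2 * Q1 := by
        rw [show (∑ t, (y2 ω t - (X2 *ᵥ (w2 ω + s • g)) t) ^ 2)
            = ∑ t, ((y2 ω t - (X2 *ᵥ w2 ω) t) - s * ((X2 *ᵥ g) t)) ^ 2 from
          Finset.sum_congr rfl fun t _ => by
            rw [hx]; simp only [Pi.add_apply, Pi.smul_apply, smul_eq_mul]; ring_nf]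
        exact stmt7_sq_sum_sub (fun t => y2 ω t - (X2 *ᵥ w2 ω) t) (fun t => (X2 *ᵥ g) t) s
      have E2 : ∑ i, ((w2 ω + s • g) i - w1 ω i) ^ 2
          = (∑ i, (w2 ω i - w1 ω i) ^ 2) + 2 * s * D2 + s ^ 2 * Q2 := by
        rw [show (∑ i, ((w2 ω + s • g) i - w1 ω i) ^ 2)
            = ∑ i, ((w2 ω i - w1 ω i) + s * g i) ^ 2 from
          Finset.sum_congr rfl fun i _ => by
            simp only [Pi.add_apply, Pi.smul_apply, smul_eq_mul]; ring_nf]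
        exact stmt7_sq_sum_add (fun i => w2 ω i - w1 ω i) (fun i => g i) s
      rw [E1, E2] at h
      have hEq : 2 * s * (μ * D2 - (n : ℝ)⁻¹ * D1) + s ^ 2 * ((n : ℝ)⁻¹ * Q1 + μ * Q2)
          = ((n : ℝ)⁻¹ * ((∑ t, (y2 ω t - (X2 *ᵥ w2 ω) t) ^ 2) - 2 * s * D1 + s ^ 2 * Q1)
              + μ * ((∑ i, (w2 ω i - w1 ω i) ^ 2) + 2 * s * D2 + s ^ 2 * Q2))
            - ((n : ℝ)⁻¹ * (∑ t, (y2 ω t - (X2 *ᵥ w2 ω) t) ^ 2)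
              + μ * (∑ i, (w2 ω i - w1 ω i) ^ 2)) := by ring
      linarith
    have hG : g ⬝ᵥ g = μ * D2 - (n : ℝ)⁻¹ * D1 := by
      have hd1 : D1 = (X2ᵀ *ᵥ r) ⬝ᵥ g := by
        rw [hD1def]
        rw [show (∑ t, r t * ((X2 *ᵥ g) t)) = r ⬝ᵥ (X2 *ᵥ g) from rfl]
        rw [Matrix.dotProduct_mulVec, ← Matrix.mulVec_transpose]
      have hd2 : D2 = (w2 ω - w1 ω) ⬝ᵥ g := rfl
      calc g ⬝ᵥ g = (μ • (w2 ω - w1 ω) - (n : ℝ)⁻¹ • (X2ᵀ *ᵥ r)) ⬝ᵥ g := by rw [← hgdef]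
        _ = μ * ((w2 ω - w1 ω) ⬝ᵥ g) - (n : ℝ)⁻¹ * ((X2ᵀ *ᵥ r) ⬝ᵥ g) := by
            rw [sub_dotProduct, smul_dotProduct, smul_dotProduct,
              smul_eq_mul, smul_eq_mul]
        _ = μ * D2 - (n : ℝ)⁻¹ * D1 := by rw [hd1, hd2]
    -- conclude g = 0
    have hQ1nn : (0:ℝ) ≤ Q1 := Finset.sum_nonneg fun i _ => sq_nonneg _
    have hQ2nn : (0:ℝ) ≤ Q2 := Finset.sum_nonneg fun i _ => sq_nonneg _
    have hninv : (0:ℝ) ≤ (n : ℝ)⁻¹ := by positivity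
    set G : ℝ := g ⬝ᵥ g with hGdef
    set Q : ℝ := (n : ℝ)⁻¹ * Q1 + μ * Q2 with hQdef
    have hkey' : ∀ s : ℝ, 0 ≤ 2 * s * G + s ^ 2 * Q := by
      intro s; rw [hG]; exact hkey s
    have hQnn : (0:ℝ) ≤ Q := add_nonneg (mul_nonneg hninv hQ1nn) (mul_nonneg hμ.le hQ2nn)
    have hGnn : (0:ℝ) ≤ G := Finset.sum_nonneg fun i _ => mul_self_nonneg _
    have hGz : G = 0 := by
      have hQ1' : (0:ℝ) < Q + 1 := by linarith
      have h := hkey' (-(G / (Q + 1)))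
      have key2 : 0 ≤ (2 * (-(G / (Q + 1))) * G + (-(G / (Q + 1))) ^ 2 * Q) * (Q + 1) ^ 2 :=
        mul_nonneg h (sq_nonneg _)
      have key3 : (2 * (-(G / (Q + 1))) * G + (-(G / (Q + 1))) ^ 2 * Q) * (Q + 1) ^ 2
          = -(G ^ 2 * (Q + 2)) := by
        field_simp
        ring
      rw [key3] at key2
      have k5 : G ^ 2 ≤ 0 := by nlinarith [sq_nonneg G, hQnn, key2]
      have k6 : G ^ 2 = 0 := le_antisymm k5 (sq_nonneg G)
      exact sq_eq_zero_iff.mp k6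
    have hzi : ∀ i, g i = 0 := by
      intro i
      have hsum : (∑ i, g i * g i) = 0 := hGz
      exact mul_self_eq_zero.mp
        ((Finset.sum_eq_zero_iff_of_nonneg (fun j _ => mul_self_nonneg (g j))).mp
          hsum i (Finset.mem_univ i))
    have hgv : μ • (w2 ω - w1 ω) = (n : ℝ)⁻¹ • (X2ᵀ *ᵥ r) := by
      have hz : μ • (w2 ω - w1 ω) - (n : ℝ)⁻¹ • (X2ᵀ *ᵥ r) = 0 :=
        hgdef.symm.trans (funext fun i => hzi i)
      exact sub_eq_zero.mp hz
    have hXr : X2ᵀ *ᵥ r = (X2ᵀ * X2) *ᵥ wstar + X2ᵀ *ᵥ ε2 ω - (X2ᵀ * X2) *ᵥ w2 ω := by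
      have hrfun : r = y2 ω - X2 *ᵥ w2 ω := rfl
      rw [hrfun, hy2 ω, Matrix.mulVec_sub, Matrix.mulVec_add, Matrix.mulVec_mulVec,
        Matrix.mulVec_mulVec]
    have hD : μ • w2 ω = (n : ℝ)⁻¹ • (X2ᵀ *ᵥ ε2 ω) + H2 *ᵥ wstar - H2 *ᵥ w2 ω + μ • w1 ω := by
      have h1 : μ • w2 ω - μ • w1 ω
          = H2 *ᵥ wstar + (n : ℝ)⁻¹ • (X2ᵀ *ᵥ ε2 ω) - H2 *ᵥ w2 ω := by
        rw [← smul_sub, hgv, hXr, smul_sub, smul_add, hH2v, hH2v]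
      have h2 := sub_eq_iff_eq_add.mp h1
      rw [h2]; abel
    rw [hEdef, Matrix.add_mulVec, Matrix.smul_mulVec, Matrix.one_mulVec,
      Matrix.mulVec_sub]
    simp only [smul_sub]
    rw [hD]
    abel
  -- explicit representations of the estimators
  set b : Fin d → ℝ := (G1d * G1 - 1) *ᵥ wstar with hbdef
  set M1 : Matrix (Fin d) (Fin n) ℝ := G1d * X1ᵀ with hM1def
  set A1 : Matrix (Fin d) (Fin n) ℝ := μ • (P * M1) with hA1def
  set A2 : Matrix (Fin d) (Fin n) ℝ := (n : ℝ)⁻¹ • (P * X2ᵀ) with hA2def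
  set c : Fin d → ℝ := μ • (P *ᵥ b) with hcdef
  have F1b : ∀ ω, w1 ω - wstar = M1 *ᵥ ε1 ω + b := by
    intro ω
    rw [hw1 ω, hy1 ω]
    simp only [Matrix.mulVec_add, Matrix.mulVec_mulVec]
    rw [← hG1, hbdef, Matrix.sub_mulVec, Matrix.one_mulVec, hM1def]
    abel
  have F1 : ∀ ω, w1 ω - wstar
      = M1 *ᵥ ε1 ω + (0 : Matrix (Fin d) (Fin n) ℝ) *ᵥ ε2 ω + b := by
    intro ω
    rw [Matrix.zero_mulVec, add_zero]
    exact F1b ω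
  have F2 : ∀ ω, w2 ω - wstar = A1 *ᵥ ε1 ω + A2 *ᵥ ε2 ω + c := by
    intro ω
    have h0 : w2 ω - wstar = P *ᵥ (E *ᵥ (w2 ω - wstar)) := by
      rw [Matrix.mulVec_mulVec, hPE, Matrix.one_mulVec]
    rw [h0, hNE ω, Matrix.mulVec_add, Matrix.mulVec_smul, Matrix.mulVec_smul, F1b ω,
      Matrix.mulVec_add, Matrix.mulVec_mulVec, Matrix.mulVec_mulVec]
    rw [hA1def, hA2def, hcdef]
    rw [Matrix.smul_mulVec, Matrix.smul_mulVec]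
    rw [smul_add]
    abel
  -- zero directions
  have hH1b : H1 *ᵥ b = 0 := by
    have hz : H1 * (G1d * G1 - 1) = 0 := by
      rw [hH1G, Matrix.smul_mul, Matrix.mul_sub, Matrix.mul_one, ← Matrix.mul_assoc,
        hmpG1, sub_self, smul_zero]
    rw [hbdef, Matrix.mulVec_mulVec, hz, Matrix.zero_mulVec]
  have hH1c : H1 *ᵥ c = 0 := by
    rw [hcdef, Matrix.mulVec_smul, Matrix.mulVec_mulVec, ← hPH1, ← Matrix.mulVec_mulVec,
      hH1b, Matrix.mulVec_zero, smul_zero]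
  -- cross-moments vanish
  have hcross : ∀ s t, ∫ ω, ε1 ω s * ε2 ω t ∂Pr = 0 := by
    intro s t
    have hi : ProbabilityTheory.IndepFun (fun ω => ε1 ω s) (fun ω => ε2 ω t) Pr :=
      hindep.comp (measurable_pi_apply s) (measurable_pi_apply t)
    have h := hi.integral_mul_eq_mul_integral (hint11 s).aestronglyMeasurable (hint12 t).aestronglyMeasurable
    have hfun : (fun ω => ε1 ω s * ε2 ω t)
        = (fun ω => ε1 ω s) * (fun ω => ε2 ω t) := rfl
    rw [hfun, h, hmean1 s, hmean2 t, zero_mul]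
  have hcross' : ∀ s t, ∫ ω, ε2 ω s * ε1 ω t ∂Pr = 0 := by
    intro s t
    rw [show (fun ω => ε2 ω s * ε1 ω t) = fun ω => ε1 ω t * ε2 ω s from
      funext fun ω => mul_comm _ _]
    exact hcross t s
  have hife : ∀ s t, Integrable (fun ω => ε2 ω s * ε1 ω t) Pr := by
    intro s t
    rw [show (fun ω => ε2 ω s * ε1 ω t) = fun ω => ε1 ω t * ε2 ω s from
      funext fun ω => mul_comm _ _]
    exact hint2x t s
  -- the two quadratic-form integrals
  have Qw2 := stmt7_quad_int Pr σ2 H1 hH1s A1 A2 c hH1c ε1 ε2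
    hint21 hint22 hint2x hife hcov1 hcov2 hcross hcross'
  have Qw1 := stmt7_quad_int Pr σ2 H1 hH1s M1 (0 : Matrix (Fin d) (Fin n) ℝ) b hH1b ε1 ε2
    hint21 hint22 hint2x hife hcov1 hcov2 hcross hcross'
  have hInt : ∀ ω, R1 (w2 ω) - R1 (w1 ω)
      = (A1 *ᵥ ε1 ω + A2 *ᵥ ε2 ω + c) ⬝ᵥ (H1 *ᵥ (A1 *ᵥ ε1 ω + A2 *ᵥ ε2 ω + c))
        - (M1 *ᵥ ε1 ω + (0 : Matrix (Fin d) (Fin n) ℝ) *ᵥ ε2 ω + b)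
            ⬝ᵥ (H1 *ᵥ (M1 *ᵥ ε1 ω + (0 : Matrix (Fin d) (Fin n) ℝ) *ᵥ ε2 ω + b)) := by
    intro ω
    rw [hR1 (w2 ω), hR1 (w1 ω), F2 ω, F1 ω]
    ring
  -- trace computations
  have hX2X2 : X2ᵀ * X2 = (n : ℝ) • H2 := by
    rw [hH2, smul_smul, mul_inv_cancel₀ hn0, one_smul]
  have hM1M1 : M1 * M1ᵀ = (n : ℝ)⁻¹ • H1d := by
    rw [hM1def, Matrix.transpose_mul, Matrix.transpose_transpose, hG1ds,
      Matrix.mul_assoc, ← Matrix.mul_assoc X1ᵀ X1 G1d, ← hG1, ← Matrix.mul_assoc,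
      hmpG2, hG1dH]
  have tM1 : trace (M1ᵀ * (H1 * M1)) = (n : ℝ)⁻¹ * trace IK := by
    rw [stmt7_trace_sandwich, hM1M1, Matrix.mul_smul, Matrix.trace_smul, smul_eq_mul,
      Matrix.trace_mul_comm, ← hIK]
  have tA1 : trace (A1ᵀ * (H1 * A1)) = (μ * μ) * ((n : ℝ)⁻¹ * trace (IK * (P * P))) := by
    have hkey : trace ((P * M1)ᵀ * (H1 * (P * M1))) = (n : ℝ)⁻¹ * trace (IK * (P * P)) := by
      rw [stmt7_trace_sandwich]
      have hUU : (P * M1) * (P * M1)ᵀ = (n : ℝ)⁻¹ • (P * (H1d * P)) := by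
        rw [Matrix.transpose_mul, hPs, Matrix.mul_assoc, ← Matrix.mul_assoc M1 M1ᵀ P,
          hM1M1, Matrix.smul_mul, Matrix.mul_smul]
      rw [hUU, Matrix.mul_smul, Matrix.trace_smul, smul_eq_mul]
      congr 1
      calc trace (H1 * (P * (H1d * P)))
          = trace ((H1 * P) * (H1d * P)) := by rw [Matrix.mul_assoc]
        _ = trace ((H1d * P) * (H1 * P)) := Matrix.trace_mul_comm _ _
        _ = trace (H1d * ((P * H1) * P)) := by
            rw [Matrix.mul_assoc H1d P (H1 * P), ← Matrix.mul_assoc P H1 P]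
        _ = trace (H1d * (H1 * (P * P))) := by rw [hPH1, Matrix.mul_assoc]
        _ = trace (IK * (P * P)) := by rw [← Matrix.mul_assoc, ← hIK]
    rw [hA1def]
    simp only [Matrix.transpose_smul, Matrix.smul_mul, Matrix.mul_smul, smul_smul,
      Matrix.trace_smul, smul_eq_mul]
    rw [hkey]
  have tA2 : trace (A2ᵀ * (H1 * A2)) = (n : ℝ)⁻¹ * trace (H1 * (H2 * (P * P))) := by
    have hkey : trace ((P * X2ᵀ)ᵀ * (H1 * (P * X2ᵀ)))
        = (n : ℝ) * trace (H1 * (H2 * (P * P))) := by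
      rw [stmt7_trace_sandwich]
      have hUU : (P * X2ᵀ) * (P * X2ᵀ)ᵀ = (n : ℝ) • (P * (H2 * P)) := by
        rw [Matrix.transpose_mul, Matrix.transpose_transpose, hPs, Matrix.mul_assoc,
          ← Matrix.mul_assoc X2ᵀ X2 P, hX2X2, Matrix.smul_mul, Matrix.mul_smul]
      rw [hUU, Matrix.mul_smul, Matrix.trace_smul, smul_eq_mul]
      congr 1
      rw [← Matrix.mul_assoc P H2 P, hPH2, Matrix.mul_assoc H2 P P]
    rw [hA2def]
    simp only [Matrix.transpose_smul, Matrix.smul_mul, Matrix.mul_smul, smul_smul,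
      Matrix.trace_smul, smul_eq_mul]
    rw [hkey]
    field_simp
  -- the final trace identity
  have hEE1 : E * (E * (P * P)) = 1 := by
    rw [← Matrix.mul_assoc E P P, hEP, Matrix.one_mul, hEP]
  have hsum : H2 * (H2 * (P * P)) + (2 * μ) • (H2 * (P * P)) + (μ * μ) • (P * P)
      = E * (E * (P * P)) := by
    rw [hEdef, two_mul, add_smul]
    simp only [Matrix.add_mul, Matrix.mul_add, Matrix.smul_mul, Matrix.mul_smul,
      Matrix.one_mul, smul_smul, smul_add]
    abel
  have h5' : IK * (H2 * (H2 * (P * P)) + (2 * μ) • (H2 * (P * P)) + (μ * μ) • (P * P)) = IK := by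
    rw [hsum, hEE1, Matrix.mul_one]
  have h5 := congrArg Matrix.trace h5'
  simp only [Matrix.mul_add, Matrix.mul_smul, Matrix.trace_add, Matrix.trace_smul,
    smul_eq_mul] at h5
  have tF : trace (IK * (H1 - H2 - (2 * μ) • 1) * H2 * (P * P))
      = trace (H1 * (H2 * (P * P))) + (μ * μ) * trace (IK * (P * P)) - trace IK := by
    have hexp : IK * (H1 - H2 - (2 * μ) • 1) * H2 * (P * P)
        = H1 * (H2 * (P * P)) - IK * (H2 * (H2 * (P * P)))
          - (2 * μ) • (IK * (H2 * (P * P))) := by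
      rw [Matrix.mul_sub, Matrix.mul_sub, Matrix.mul_smul, Matrix.mul_one, hIKH1]
      rw [Matrix.sub_mul, Matrix.sub_mul, Matrix.sub_mul, Matrix.sub_mul,
        Matrix.smul_mul, Matrix.smul_mul]
      simp only [Matrix.mul_assoc]
    rw [hexp]
    rw [Matrix.trace_sub, Matrix.trace_sub, Matrix.trace_smul, smul_eq_mul]
    linarith [h5]
  -- put everything together
  calc ∫ ω, (R1 (w2 ω) - R1 (w1 ω)) ∂Pr
      = ∫ ω, ((A1 *ᵥ ε1 ω + A2 *ᵥ ε2 ω + c) ⬝ᵥ (H1 *ᵥ (A1 *ᵥ ε1 ω + A2 *ᵥ ε2 ω + c))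
          - (M1 *ᵥ ε1 ω + (0 : Matrix (Fin d) (Fin n) ℝ) *ᵥ ε2 ω + b)
              ⬝ᵥ (H1 *ᵥ (M1 *ᵥ ε1 ω + (0 : Matrix (Fin d) (Fin n) ℝ) *ᵥ ε2 ω + b))) ∂Pr :=
        integral_congr_ae (Filter.Eventually.of_forall hInt)
    _ = (σ2 * trace (A1ᵀ * (H1 * A1)) + σ2 * trace (A2ᵀ * (H1 * A2)))
        - (σ2 * trace (M1ᵀ * (H1 * M1))
          + σ2 * trace ((0 : Matrix (Fin d) (Fin n) ℝ)ᵀ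
              * (H1 * (0 : Matrix (Fin d) (Fin n) ℝ)))) := by
        rw [integral_sub Qw2.1 Qw1.1, Qw2.2, Qw1.2]
    _ = σ2 / (n : ℝ) * trace (IK * (H1 - H2 - (2 * μ) • 1) * H2 * (P * P)) := by
        rw [tA1, tA2, tM1, tF]
        simp only [Matrix.mul_zero, Matrix.transpose_zero, Matrix.zero_mul,
          Matrix.trace_zero, mul_zero, add_zero]
        field_simp
        ring
end

section
/- Setting μ = 0 in the regularized continual learning formulas recovers: DoF_F = tr{H^(1)(H^(2))^†} - rank(H^(1)H^(2)), DoF_I = rank(H^(1)) + rank(H^(2)), and bias = 0, provided H^(1) and H^(2) commute. Here tr{H^(1)(H^(2))^†} is the trace of H^(1) times the pseudoinverse of H^(2). -/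
open Matrix



lemma mp_unique {d : ℕ} (M X Y : Matrix (Fin d) (Fin d) ℝ)
    (h1 : M * X * M = M) (h2 : X * M * X = X) (h3 : (M * X)ᵀ = M * X) (h4 : (X * M)ᵀ = X * M)
    (k1 : M * Y * M = M) (k2 : Y * M * Y = Y) (k3 : (M * Y)ᵀ = M * Y) (k4 : (Y * M)ᵀ = Y * M) :
    X = Y := by
  have hMX : M * X = M * Y := by
    calc M * X = (M * X)ᵀ := h3.symm
      _ = ((M * Y) * (M * X))ᵀ := by
            rw [show (M * Y) * (M * X) = (M * Y * M) * X by simp only [mul_assoc], k1]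
      _ = (M * X)ᵀ * (M * Y)ᵀ := transpose_mul _ _
      _ = (M * X) * (M * Y) := by rw [h3, k3]
      _ = M * Y := by rw [show (M * X) * (M * Y) = (M * X * M) * Y by simp only [mul_assoc], h1]
  have hXM : X * M = Y * M := by
    calc X * M = (X * M)ᵀ := h4.symm
      _ = ((X * M) * (Y * M))ᵀ := by
            rw [show (X * M) * (Y * M) = X * (M * Y * M) by simp only [mul_assoc], k1]
      _ = (Y * M)ᵀ * (X * M)ᵀ := transpose_mul _ _
      _ = (Y * M) * (X * M) := by rw [h4, k4]
      _ = Y * M := by rw [show (Y * M) * (X * M) = Y * (M * X * M) by simp only [mul_assoc], h1]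
  calc X = X * M * X := h2.symm
    _ = Y * M * X := by rw [hXM]
    _ = Y * (M * X) := by rw [mul_assoc]
    _ = Y * (M * Y) := by rw [hMX]
    _ = Y := by rw [← mul_assoc, k2]

lemma comm_pinv {d : ℕ} (M X Md : Matrix (Fin d) (Fin d) ℝ)
    (hMt : Mᵀ = M) (hXt : Xᵀ = X) (hMdt : Mdᵀ = Md) (hc : M * X = X * M)
    (m1 : M * Md * M = M) (m2 : Md * M * Md = Md) (m4 : (Md * M)ᵀ = Md * M) :
    Md * X = X * Md := by
  have hP : Md * M = M * Md := by rw [← m4, transpose_mul, hMt, hMdt]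
  have hM0 : M * (1 - Md * M) = 0 := by
    rw [mul_sub, mul_one, show M * (Md * M) = M * Md * M by rw [mul_assoc], m1, sub_self]
  have hPX1 : (Md * M) * X * (1 - Md * M) = 0 := by
    calc (Md * M) * X * (1 - Md * M) = Md * (X * (M * (1 - Md * M))) := by
          rw [show (Md * M) * X = Md * (M * X) by rw [mul_assoc], hc]; simp only [mul_assoc]
      _ = 0 := by rw [hM0, mul_zero, mul_zero]
  have hPX : (Md * M) * X = (Md * M) * X * (Md * M) := by
    have e := hPX1
    rw [mul_sub, mul_one, sub_eq_zero] at e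
    exact e
  have hXP : X * (Md * M) = (Md * M) * X * (Md * M) := by
    calc X * (Md * M) = ((Md * M) * X)ᵀ := by rw [transpose_mul, m4, hXt]
      _ = ((Md * M) * X * (Md * M))ᵀ := by rw [← hPX]
      _ = (Md * M)ᵀ * ((Md * M) * X)ᵀ := transpose_mul _ _
      _ = (Md * M) * X * (Md * M) := by rw [m4, transpose_mul, m4, hXt]; simp only [mul_assoc]
  have hcomP : (Md * M) * X = X * (Md * M) := hPX.trans hXP.symm
  have e1 : X * Md = Md * M * X * Md := by
    calc X * Md = X * (Md * M * Md) := by rw [m2]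
      _ = (X * (Md * M)) * Md := by simp only [mul_assoc]
      _ = ((Md * M) * X) * Md := by rw [hcomP]
      _ = Md * M * X * Md := by simp only [mul_assoc]
  calc Md * X = (X * Md)ᵀ := by rw [transpose_mul, hMdt, hXt]
    _ = (Md * M * X * Md)ᵀ := by rw [← e1]
    _ = Mdᵀ * (Md * M * X)ᵀ := transpose_mul _ _
    _ = Mdᵀ * (Xᵀ * (Md * M)ᵀ) := by rw [transpose_mul]
    _ = Md * (X * (Md * M)) := by rw [hMdt, hXt, m4]
    _ = Md * (X * (M * Md)) := by rw [hP]
    _ = Md * ((M * X) * Md) := by rw [show X * (M * Md) = (X * M) * Md by rw [mul_assoc], hc]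
    _ = (Md * M) * (X * Md) := by simp only [mul_assoc]
    _ = ((Md * M) * X) * Md := by simp only [mul_assoc]
    _ = (X * (Md * M)) * Md := by rw [hcomP]
    _ = X * (Md * M * Md) := by simp only [mul_assoc]
    _ = X * Md := by rw [m2]

lemma trace_idem {d : ℕ} (E : Matrix (Fin d) (Fin d) ℝ) (h : E * E = E) :
    E.trace = (E.rank : ℝ) := by
  have hc : E.mulVecLin ∘ₗ E.mulVecLin = E.mulVecLin := by rw [← Matrix.mulVecLin_mul, h]
  have hp : LinearMap.IsProj (LinearMap.range E.mulVecLin) E.mulVecLin :=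
    ⟨fun x => LinearMap.mem_range_self _ x, fun x hx => by
      obtain ⟨y, rfl⟩ := hx
      exact LinearMap.congr_fun hc y⟩
  have ht := hp.trace
  rw [LinearMap.trace_eq_matrix_trace ℝ (Pi.basisFun ℝ (Fin d)),
    LinearMap.toMatrix_eq_toMatrix', ← Matrix.toLin'_apply', LinearMap.toMatrix'_toLin'] at ht
  rw [ht]
  rfl

/-- Setting `μ = 0` in the regularized continual-learning formulas (with `(H⁽²⁾+μI)⁻²`
interpreted via the pseudoinverse at `μ = 0`) recovers the OCL quantities:
`DoF_F = tr{H⁽¹⁾ (H⁽²⁾)†} - rank(H⁽¹⁾H⁽²⁾)`, `DoF_I = rank(H⁽¹⁾) + rank(H⁽²⁾)`, and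
`bias = 0`, for commuting PSD `H⁽¹⁾ = A`, `H⁽²⁾ = B`, where `I_K = A† A` projects onto
`range(A)` and `I_{K^c} = 1 - A† A`. -/
theorem stmt9 {d : ℕ} (A B Ad Bd : Matrix (Fin d) (Fin d) ℝ)
    (hA : A.PosSemidef) (hB : B.PosSemidef) (hcomm : A * B = B * A)
    -- `Ad` is the Moore–Penrose pseudoinverse of `A`
    (hmpA1 : A * Ad * A = A) (hmpA2 : Ad * A * Ad = Ad)
    (hmpA3 : (A * Ad)ᵀ = A * Ad) (hmpA4 : (Ad * A)ᵀ = Ad * A)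
    -- `Bd` is the Moore–Penrose pseudoinverse of `B`
    (hmpB1 : B * Bd * B = B) (hmpB2 : Bd * B * Bd = Bd)
    (hmpB3 : (B * Bd)ᵀ = B * Bd) (hmpB4 : (Bd * B)ᵀ = Bd * B)
    (wstar : Fin d → ℝ) :
    -- DoF_F at μ = 0
    trace ((Ad * A) * (A - B - ((2 : ℝ) * 0) • 1) * B * (Bd * Bd))
        = trace (A * Bd) - ((A * B).rank : ℝ)
      -- DoF_I at μ = 0
      ∧ trace (((0 : ℝ) ^ 2 • Ad + B) * B * (Bd * Bd)) + (A.rank : ℝ)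
          = (A.rank : ℝ) + (B.rank : ℝ)
      -- bias at μ = 0
      ∧ (0 : ℝ) ^ 2 * (wstar ⬝ᵥ (((1 - Ad * A) * B * (Bd * Bd)) *ᵥ wstar)) = 0 := by
  have hAt : Aᵀ = A := by
    have := hA.isHermitian.eq
    simpa [Matrix.conjTranspose_eq_transpose_of_trivial] using this
  have hBt : Bᵀ = B := by
    have := hB.isHermitian.eq
    simpa [Matrix.conjTranspose_eq_transpose_of_trivial] using this
  -- symmetry of the pseudoinverses
  have hAdt : Adᵀ = Ad := by
    have c1 : A * Adᵀ * A = A := by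
      have e := congrArg transpose hmpA1
      rw [transpose_mul, transpose_mul, hAt, ← mul_assoc] at e
      exact e
    have c2 : Adᵀ * A * Adᵀ = Adᵀ := by
      have e := congrArg transpose hmpA2
      rw [transpose_mul, transpose_mul, hAt, ← mul_assoc] at e
      exact e
    have eA : A * Adᵀ = Ad * A := by
      calc A * Adᵀ = Aᵀ * Adᵀ := by rw [hAt]
        _ = (Ad * A)ᵀ := (transpose_mul _ _).symm
        _ = Ad * A := hmpA4
    have eA' : Adᵀ * A = A * Ad := by
      calc Adᵀ * A = Adᵀ * Aᵀ := by rw [hAt]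
        _ = (A * Ad)ᵀ := (transpose_mul _ _).symm
        _ = A * Ad := hmpA3
    have c3 : (A * Adᵀ)ᵀ = A * Adᵀ := by rw [eA, hmpA4]
    have c4 : (Adᵀ * A)ᵀ = Adᵀ * A := by rw [eA', hmpA3]
    exact mp_unique A Adᵀ Ad c1 c2 c3 c4 hmpA1 hmpA2 hmpA3 hmpA4
  have hBdt : Bdᵀ = Bd := by
    have c1 : B * Bdᵀ * B = B := by
      have e := congrArg transpose hmpB1
      rw [transpose_mul, transpose_mul, hBt, ← mul_assoc] at e
      exact e
    have c2 : Bdᵀ * B * Bdᵀ = Bdᵀ := by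
      have e := congrArg transpose hmpB2
      rw [transpose_mul, transpose_mul, hBt, ← mul_assoc] at e
      exact e
    have eB : B * Bdᵀ = Bd * B := by
      calc B * Bdᵀ = Bᵀ * Bdᵀ := by rw [hBt]
        _ = (Bd * B)ᵀ := (transpose_mul _ _).symm
        _ = Bd * B := hmpB4
    have eB' : Bdᵀ * B = B * Bd := by
      calc Bdᵀ * B = Bdᵀ * Bᵀ := by rw [hBt]
        _ = (B * Bd)ᵀ := (transpose_mul _ _).symm
        _ = B * Bd := hmpB3
    have c3 : (B * Bdᵀ)ᵀ = B * Bdᵀ := by rw [eB, hmpB4]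
    have c4 : (Bdᵀ * B)ᵀ = Bdᵀ * B := by rw [eB', hmpB3]
    exact mp_unique B Bdᵀ Bd c1 c2 c3 c4 hmpB1 hmpB2 hmpB3 hmpB4
  -- commutation facts
  have hAAd : A * Ad = Ad * A := by rw [← hmpA3, transpose_mul, hAdt, hAt]
  have hBBd : B * Bd = Bd * B := by rw [← hmpB3, transpose_mul, hBdt, hBt]
  have hBdA : Bd * A = A * Bd := comm_pinv B A Bd hBt hAt hBdt hcomm.symm hmpB1 hmpB2 hmpB4
  have hAdB : Ad * B = B * Ad := comm_pinv A B Ad hAt hBt hAdt hcomm hmpA1 hmpA2 hmpA4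
  have hAdBd : Ad * Bd = Bd * Ad := comm_pinv A Bd Ad hAt hBdt hAdt hBdA.symm hmpA1 hmpA2 hmpA4
  -- basic reductions
  have hAdAA : Ad * A * A = A := by rw [← hAAd, hmpA1]
  have r1 : B * (Bd * Bd) = Bd := by rw [← mul_assoc, hBBd, hmpB2]
  have hPP : (Ad * A) * (Ad * A) = Ad * A := by
    rw [show (Ad * A) * (Ad * A) = (Ad * A * Ad) * A by simp only [mul_assoc], hmpA2]
  have hQQ : (B * Bd) * (B * Bd) = B * Bd := by
    rw [show (B * Bd) * (B * Bd) = (B * Bd * B) * Bd by simp only [mul_assoc], hmpB1]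
  -- the projection E onto range(A) ∩ range(B)
  have hEc : (B * Bd) * (Ad * A) = (Ad * A) * (B * Bd) := by
    calc (B * Bd) * (Ad * A) = B * (Bd * Ad) * A := by simp only [mul_assoc]
      _ = B * (Ad * Bd) * A := by rw [← hAdBd]
      _ = (B * Ad) * (Bd * A) := by simp only [mul_assoc]
      _ = (Ad * B) * (A * Bd) := by rw [← hAdB, hBdA]
      _ = Ad * (B * A) * Bd := by simp only [mul_assoc]
      _ = Ad * (A * B) * Bd := by rw [← hcomm]
      _ = (Ad * A) * (B * Bd) := by simp only [mul_assoc]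
  have hEE : ((Ad * A) * (B * Bd)) * ((Ad * A) * (B * Bd)) = (Ad * A) * (B * Bd) := by
    calc ((Ad * A) * (B * Bd)) * ((Ad * A) * (B * Bd))
        = (Ad * A) * ((B * Bd) * (Ad * A)) * (B * Bd) := by simp only [mul_assoc]
      _ = (Ad * A) * ((Ad * A) * (B * Bd)) * (B * Bd) := by rw [hEc]
      _ = ((Ad * A) * (Ad * A)) * ((B * Bd) * (B * Bd)) := by simp only [mul_assoc]
      _ = (Ad * A) * (B * Bd) := by rw [hPP, hQQ]
  have hE1 : (A * B) * (Bd * Ad) = (Ad * A) * (B * Bd) := by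
    calc (A * B) * (Bd * Ad) = A * (B * (Bd * Ad)) := by simp only [mul_assoc]
      _ = A * (B * (Ad * Bd)) := by rw [← hAdBd]
      _ = A * ((B * Ad) * Bd) := by rw [mul_assoc B Ad Bd]
      _ = A * ((Ad * B) * Bd) := by rw [← hAdB]
      _ = (A * Ad) * (B * Bd) := by simp only [mul_assoc]
      _ = (Ad * A) * (B * Bd) := by rw [hAAd]
  have hE2 : ((Ad * A) * (B * Bd)) * (A * B) = A * B := by
    calc ((Ad * A) * (B * Bd)) * (A * B)
        = (Ad * A) * (B * (Bd * A) * B) := by simp only [mul_assoc]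
      _ = (Ad * A) * (B * (A * Bd) * B) := by rw [hBdA]
      _ = (Ad * A) * ((B * A) * (Bd * B)) := by simp only [mul_assoc]
      _ = (Ad * A) * ((A * B) * (Bd * B)) := by rw [← hcomm]
      _ = ((Ad * A) * A) * (B * (Bd * B)) := by simp only [mul_assoc]
      _ = A * (B * (Bd * B)) := by rw [hAdAA]
      _ = A * ((B * Bd) * B) := by rw [mul_assoc B Bd B]
      _ = A * B := by rw [hmpB1]
  have hrankE : ((Ad * A) * (B * Bd)).rank = (A * B).rank := by
    refine le_antisymm ?_ ?_
    · calc ((Ad * A) * (B * Bd)).rank = ((A * B) * (Bd * Ad)).rank := by rw [hE1]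
        _ ≤ (A * B).rank := rank_mul_le_left _ _
    · calc (A * B).rank = (((Ad * A) * (B * Bd)) * (A * B)).rank := by rw [hE2]
        _ ≤ ((Ad * A) * (B * Bd)).rank := rank_mul_le_left _ _
  refine ⟨?_, ?_, ?_⟩
  · -- DoF_F
    have hkey1 : (Ad * A) * (A - B - ((2 : ℝ) * 0) • 1) * B * (Bd * Bd)
        = A * Bd - (Ad * A) * (B * Bd) := by
      have h20 : (A - B - ((2 : ℝ) * 0) • (1 : Matrix (Fin d) (Fin d) ℝ)) = A - B := by
        norm_num
      rw [h20, mul_sub (Ad * A) A B, hAdAA, sub_mul, sub_mul,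
        mul_assoc A B (Bd * Bd), r1, mul_assoc (Ad * A * B) B (Bd * Bd), r1]
      simp only [mul_assoc]
    rw [hkey1, trace_sub, trace_idem _ hEE, hrankE]
  · -- DoF_I
    have h0 : ((0 : ℝ) ^ 2 • Ad + B) = B := by norm_num
    have hrB : (B * Bd).rank = B.rank := by
      refine le_antisymm (rank_mul_le_left B Bd) ?_
      calc B.rank = ((B * Bd) * B).rank := by rw [hmpB1]
        _ ≤ (B * Bd).rank := rank_mul_le_left _ _
    rw [h0, mul_assoc B B (Bd * Bd), r1, trace_idem _ hQQ, hrB]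
    ring
  · norm_num
end

section
/- Lower bound showing failure of ℓ₂-RCL: with H^(1) = diag(1, n^{-2}, 0, ...), H^(2) = diag(n^{-1}, n^{-1}, 0, ...), σ² = 1, for every μ > 0 the expected excess risk satisfies E[R(w^(2))] - R(w*) ≥ σ²( μ²/(1/n+μ)² + (1/n)²/(1/n+μ)² ) ≥ σ²/2. -/
open Matrix MeasureTheory

lemma quad_coeff_zero (α β : ℝ) (hα : 0 < α) (h : ∀ δ : ℝ, 0 ≤ α*δ^2 + β*δ) : β = 0 := by
  have h1 := h (-β/(2*α))
  have key : α*(-β/(2*α))^2 + β*(-β/(2*α)) = -(β^2/(4*α)) := by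
    field_simp; ring
  rw [key] at h1
  have h3 : β^2/(4*α) ≤ 0 := by linarith
  have h5 : β^2 ≤ 0*(4*α) := (div_le_iff₀ (by positivity)).mp h3
  have : β^2 = 0 := le_antisymm (by linarith) (sq_nonneg β)
  exact pow_eq_zero_iff (by norm_num) |>.mp this

lemma mp_unique_s16 {m : Type*} [Fintype m] [DecidableEq m]
    (A B C : Matrix m m ℝ)
    (hB1 : A * B * A = A) (hB2 : B * A * B = B) (hB3 : (A*B)ᵀ = A*B) (hB4 : (B*A)ᵀ = B*A)
    (hC1 : A * C * A = A) (hC2 : C * A * C = C) (hC3 : (A*C)ᵀ = A*C) (hC4 : (C*A)ᵀ = C*A) :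
    B = C := by
  have hAB : A*B = A*C := by
    calc A*B = (A*B)ᵀ := hB3.symm
    _ = Bᵀ*Aᵀ := by rw [Matrix.transpose_mul]
    _ = Bᵀ*(A*C*A)ᵀ := by rw [hC1]
    _ = Bᵀ*(Aᵀ*(A*C)ᵀ) := by rw [Matrix.transpose_mul (A*C) A]
    _ = (A*B)ᵀ*(A*C)ᵀ := by rw [Matrix.transpose_mul A B, Matrix.mul_assoc]
    _ = (A*B)*(A*C) := by rw [hB3, hC3]
    _ = A*C := by rw [← Matrix.mul_assoc, hB1]
  have hBA : B*A = C*A := by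
    calc B*A = (B*A)ᵀ := hB4.symm
    _ = Aᵀ*Bᵀ := by rw [Matrix.transpose_mul]
    _ = (A*C*A)ᵀ*Bᵀ := by rw [hC1]
    _ = ((C*A)ᵀ*Aᵀ)*Bᵀ := by rw [Matrix.mul_assoc A C A, Matrix.transpose_mul A (C*A)]
    _ = (C*A)ᵀ*(B*A)ᵀ := by rw [Matrix.transpose_mul B A, Matrix.mul_assoc]
    _ = (C*A)*(B*A) := by rw [hB4, hC4]
    _ = C*A := by rw [Matrix.mul_assoc, ← Matrix.mul_assoc A B A, hB1]
  calc B = B*A*B := hB2.symm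
  _ = C*A*B := by rw [hBA]
  _ = C*(A*C) := by rw [Matrix.mul_assoc, hAB]
  _ = C := by rw [← Matrix.mul_assoc, hC2]

lemma bilin_sum {Ω : Type*} [MeasurableSpace Ω] (Pr : Measure Ω) {n : ℕ}
    (a b : Fin n → ℝ) (εa εb : Ω → Fin n → ℝ) (V : Fin n → Fin n → ℝ)
    (hint : ∀ s t, Integrable (fun ω => εa ω s * εb ω t) Pr)
    (hval : ∀ s t, ∫ ω, εa ω s * εb ω t ∂Pr = V s t) :
    Integrable (fun ω => (∑ s, a s * εa ω s) * (∑ t, b t * εb ω t)) Pr ∧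
    ∫ ω, (∑ s, a s * εa ω s) * (∑ t, b t * εb ω t) ∂Pr = ∑ s, ∑ t, a s * b t * V s t := by
  have hfun : ∀ ω : Ω, (∑ s, a s * εa ω s) * (∑ t, b t * εb ω t)
      = ∑ s, ∑ t, (a s * b t) * (εa ω s * εb ω t) := by
    intro ω
    rw [Finset.sum_mul_sum]
    exact Finset.sum_congr rfl fun s _ => Finset.sum_congr rfl fun t _ => by ring
  have hint' : Integrable (fun ω => ∑ s, ∑ t, (a s * b t) * (εa ω s * εb ω t)) Pr :=
    integrable_finset_sum _ fun s _ => integrable_finset_sum _ fun t _ => (hint s t).const_mul _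
  constructor
  · exact hint'.congr (by filter_upwards with ω using (hfun ω).symm)
  · calc ∫ ω, (∑ s, a s * εa ω s) * (∑ t, b t * εb ω t) ∂Pr
        = ∫ ω, ∑ s, ∑ t, (a s * b t) * (εa ω s * εb ω t) ∂Pr :=
          integral_congr_ae (by filter_upwards with ω using hfun ω)
    _ = ∑ s, ∑ t, ∫ ω, (a s * b t) * (εa ω s * εb ω t) ∂Pr := by
          rw [integral_finset_sum _ fun s _ =>
            integrable_finset_sum _ fun t _ => (hint s t).const_mul _]
          exact Finset.sum_congr rfl fun s _ =>
            integral_finset_sum _ fun t _ => (hint s t).const_mul _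
    _ = ∑ s, ∑ t, a s * b t * V s t := by
          refine Finset.sum_congr rfl fun s _ => Finset.sum_congr rfl fun t _ => ?_
          rw [MeasureTheory.integral_const_mul, hval]

lemma diag_kron_sum {n : ℕ} (a b : Fin n → ℝ) :
    ∑ s, ∑ t, a s * b t * (if s = t then (1:ℝ) else 0) = ∑ t, a t * b t := by
  simp only [mul_ite, mul_one, mul_zero, Finset.sum_ite_eq, Finset.mem_univ, if_true]

set_option maxHeartbeats 1600000 in
/-- Failure of ℓ₂-RCL (Example 3): with `H⁽¹⁾ = diag(1, n⁻², 0, …)`,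
`H⁽²⁾ = diag(n⁻¹, n⁻¹, 0, …)`, `σ² = 1`, `‖w*‖₂ ≤ 1`, for every `μ > 0` the expected
excess joint risk of the ℓ₂-regularized continual learning output `w⁽²⁾` satisfies
`E[R(w⁽²⁾)] - R(w*) ≥ σ²(μ²/(1/n+μ)² + (1/n)²/(1/n+μ)²) ≥ σ²/2`. -/
theorem stmt16 {d n : ℕ} {Ω : Type*} [MeasurableSpace Ω] (Pr : Measure Ω)
    [IsProbabilityMeasure Pr] (hn : 0 < n) (hd : 2 ≤ d)
    (X1 X2 : Matrix (Fin n) (Fin d) ℝ) (wstar : Fin d → ℝ) (σ2 μ : ℝ) (hμ : 0 < μ)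
    (hσ2 : σ2 = 1) (hwstar : ∑ i, wstar i ^ 2 ≤ 1)
    (H1 H2 : Matrix (Fin d) (Fin d) ℝ)
    (hH1 : H1 = ((n : ℝ))⁻¹ • (X1ᵀ * X1)) (hH2 : H2 = ((n : ℝ))⁻¹ • (X2ᵀ * X2))
    (hH1diag : H1 = Matrix.diagonal (fun i : Fin d =>
      if (i : ℕ) = 0 then (1 : ℝ) else if (i : ℕ) = 1 then ((n : ℝ) ^ 2)⁻¹ else 0))
    (hH2diag : H2 = Matrix.diagonal (fun i : Fin d =>
      if (i : ℕ) < 2 then ((n : ℝ))⁻¹ else 0))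
    -- independent, mean-zero, covariance `σ² I` noises
    (ε1 ε2 : Ω → Fin n → ℝ)
    (hindep : ProbabilityTheory.IndepFun ε1 ε2 Pr)
    (hmean1 : ∀ t, ∫ ω, ε1 ω t ∂Pr = 0) (hmean2 : ∀ t, ∫ ω, ε2 ω t ∂Pr = 0)
    (hcov1 : ∀ s t, ∫ ω, ε1 ω s * ε1 ω t ∂Pr = if s = t then σ2 else 0)
    (hcov2 : ∀ s t, ∫ ω, ε2 ω s * ε2 ω t ∂Pr = if s = t then σ2 else 0)
    (hint11 : ∀ t, Integrable (fun ω => ε1 ω t) Pr)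
    (hint12 : ∀ t, Integrable (fun ω => ε2 ω t) Pr)
    (hint21 : ∀ s t, Integrable (fun ω => ε1 ω s * ε1 ω t) Pr)
    (hint22 : ∀ s t, Integrable (fun ω => ε2 ω s * ε2 ω t) Pr)
    (hint2x : ∀ s t, Integrable (fun ω => ε1 ω s * ε2 ω t) Pr)
    -- labels
    (y1 y2 : Ω → Fin n → ℝ)
    (hy1 : ∀ ω, y1 ω = X1 *ᵥ wstar + ε1 ω) (hy2 : ∀ ω, y2 ω = X2 *ᵥ wstar + ε2 ω)
    -- `G1d` is the Moore–Penrose pseudoinverse of `G1 = X1ᵀX1`; `w⁽¹⁾` is OLS on task 1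
    (G1 G1d : Matrix (Fin d) (Fin d) ℝ) (hG1 : G1 = X1ᵀ * X1)
    (hmpG1 : G1 * G1d * G1 = G1) (hmpG2 : G1d * G1 * G1d = G1d)
    (hmpG3 : (G1 * G1d)ᵀ = G1 * G1d) (hmpG4 : (G1d * G1)ᵀ = G1d * G1)
    (w1 : Ω → Fin d → ℝ) (hw1 : ∀ ω, w1 ω = G1d *ᵥ (X1ᵀ *ᵥ y1 ω))
    -- `w⁽²⁾` minimizes `(1/n)‖y⁽²⁾ - X⁽²⁾w‖² + μ‖w - w⁽¹⁾‖²`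
    (w2 : Ω → Fin d → ℝ)
    (hw2 : ∀ ω, ∀ w : Fin d → ℝ,
      ((n : ℝ))⁻¹ * ∑ t, (y2 ω t - (X2 *ᵥ w2 ω) t) ^ 2 + μ * ∑ i, (w2 ω i - w1 ω i) ^ 2
        ≤ ((n : ℝ))⁻¹ * ∑ t, (y2 ω t - (X2 *ᵥ w) t) ^ 2 + μ * ∑ i, (w i - w1 ω i) ^ 2)
    -- joint risk `R = R₁ + R₂`
    (R : (Fin d → ℝ) → ℝ)
    (hR : ∀ w, R w = ((w - wstar) ⬝ᵥ (H1 *ᵥ (w - wstar)) + σ2)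
      + ((w - wstar) ⬝ᵥ (H2 *ᵥ (w - wstar)) + σ2)) :
    (∫ ω, R (w2 ω) ∂Pr) - R wstar
        ≥ σ2 * (μ ^ 2 / (((n : ℝ))⁻¹ + μ) ^ 2 + (((n : ℝ))⁻¹) ^ 2 / (((n : ℝ))⁻¹ + μ) ^ 2)
      ∧ σ2 * (μ ^ 2 / (((n : ℝ))⁻¹ + μ) ^ 2 + (((n : ℝ))⁻¹) ^ 2 / (((n : ℝ))⁻¹ + μ) ^ 2)
          ≥ σ2 / 2 := by
  subst hσ2
  have hnR : (0:ℝ) < (n:ℝ) := by exact_mod_cast hn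
  have hnne : (n:ℝ) ≠ 0 := ne_of_gt hnR
  have hn1 : (1:ℝ) ≤ (n:ℝ) := by exact_mod_cast hn
  set N : ℝ := (n:ℝ) with hN
  have hd0 : 0 < d := by omega
  have hd1 : 1 < d := by omega
  set i0 : Fin d := ⟨0, hd0⟩ with hi0
  set i1 : Fin d := ⟨1, hd1⟩ with hi1
  have hne01 : i0 ≠ i1 := by simp [hi0, hi1, Fin.ext_iff]
  have hi0v : ((i0 : Fin d) : ℕ) = 0 := rfl
  have hi1v : ((i1 : Fin d) : ℕ) = 1 := rfl
  set f : Fin d → ℝ := fun i => if (i:ℕ) = 0 then N else if (i:ℕ) = 1 then N⁻¹ else 0 with hf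
  set g : Fin d → ℝ := fun i => if (i:ℕ) = 0 then N⁻¹ else if (i:ℕ) = 1 then N else 0 with hg
  set k : Fin d → ℝ := fun i => if (i:ℕ) < 2 then (1:ℝ) else 0 with hk
  -- diagonal forms of the Gram matrices
  have hG1diag : G1 = Matrix.diagonal f := by
    have hX1 : X1ᵀ * X1 = N • H1 := by
      rw [hH1, smul_smul, mul_inv_cancel₀ hnne, one_smul]
    rw [hG1, hX1, hH1diag]
    ext i j
    rcases eq_or_ne i j with rfl | hij
    · simp only [Matrix.smul_apply, Matrix.diagonal_apply_eq, hf, smul_eq_mul]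
      split_ifs
      · simp
      · rw [pow_two]; field_simp
      · simp
    · simp [Matrix.diagonal_apply_ne _ hij]
  have hG2diag : X2ᵀ * X2 = Matrix.diagonal k := by
    have hX2 : X2ᵀ * X2 = N • H2 := by
      rw [hH2, smul_smul, mul_inv_cancel₀ hnne, one_smul]
    rw [hX2, hH2diag]
    ext i j
    rcases eq_or_ne i j with rfl | hij
    · simp only [Matrix.smul_apply, Matrix.diagonal_apply_eq, hk, smul_eq_mul]
      split_ifs
      · field_simp
      · simp
    · simp [Matrix.diagonal_apply_ne _ hij]
  have hX1X1 : X1ᵀ * X1 = Matrix.diagonal f := hG1.symm.trans hG1diag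
  -- identification of the pseudoinverse
  have hfg : ∀ i, f i * g i * f i = f i := by
    intro i; simp only [hf, hg]
    split_ifs <;> field_simp <;> simp
  have hgf : ∀ i, g i * f i * g i = g i := by
    intro i; simp only [hf, hg]
    split_ifs <;> field_simp <;> simp
  have hG1d : G1d = Matrix.diagonal g := by
    refine mp_unique_s16 G1 G1d (Matrix.diagonal g) hmpG1 hmpG2 hmpG3 hmpG4 ?_ ?_ ?_ ?_
    · rw [hG1diag, Matrix.diagonal_mul_diagonal, Matrix.diagonal_mul_diagonal]
      exact congrArg Matrix.diagonal (funext hfg)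
    · rw [hG1diag, Matrix.diagonal_mul_diagonal, Matrix.diagonal_mul_diagonal]
      exact congrArg Matrix.diagonal (funext hgf)
    · rw [hG1diag, Matrix.diagonal_mul_diagonal, Matrix.diagonal_transpose]
    · rw [hG1diag, Matrix.diagonal_mul_diagonal, Matrix.diagonal_transpose]
  -- noise linear functionals
  set u : Fin d → Ω → ℝ := fun i ω => ∑ t, X1 t i * ε1 ω t with hu
  set v : Fin d → Ω → ℝ := fun i ω => ∑ t, X2 t i * ε2 ω t with hv
  -- column norms
  have hq2 : ∀ i : Fin d, (i:ℕ) < 2 → ∑ t, (X2 t i)^2 = 1 := by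
    intro i hi
    have h := congrArg (fun M => M i i) hG2diag
    simp only [Matrix.mul_apply, Matrix.transpose_apply, Matrix.diagonal_apply_eq] at h
    simp only [hk] at h
    rw [if_pos hi] at h
    calc ∑ t, (X2 t i)^2 = ∑ t, X2 t i * X2 t i :=
          Finset.sum_congr rfl fun t _ => pow_two _
    _ = 1 := h
  have hq1 : ∀ i : Fin d, ∑ t, (X1 t i)^2 = f i := by
    intro i
    have h := congrArg (fun M => M i i) hX1X1
    simp only [Matrix.mul_apply, Matrix.transpose_apply, Matrix.diagonal_apply_eq] at h
    calc ∑ t, (X1 t i)^2 = ∑ t, X1 t i * X1 t i :=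
          Finset.sum_congr rfl fun t _ => pow_two _
    _ = f i := h
  have hproj : ∀ i : Fin d, (i:ℕ) < 2 → ∀ z : Fin d → ℝ,
      ∑ t, (X2 *ᵥ z) t * X2 t i = z i := by
    intro i hi z
    have e1 : ∑ t, (X2 *ᵥ z) t * X2 t i = (X2ᵀ *ᵥ (X2 *ᵥ z)) i := by
      simp only [Matrix.mulVec, dotProduct, Matrix.transpose_apply]
      exact Finset.sum_congr rfl fun t _ => by ring
    rw [e1, Matrix.mulVec_mulVec, hG2diag, Matrix.mulVec_diagonal]
    simp [hk, hi]
    intro h; exact absurd hi (by omega)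
  -- formula for the first-task OLS solution on the first two coordinates
  have hw1i : ∀ ω, ∀ i : Fin d, (i:ℕ) < 2 → w1 ω i = wstar i + g i * u i ω := by
    intro ω i hi
    have hgfi : g i * f i = 1 := by
      simp only [hf, hg]
      rcases (by omega : (i:ℕ) = 0 ∨ (i:ℕ) = 1) with h | h <;> simp [h] <;> field_simp
    have h1 : w1 ω = Matrix.diagonal g *ᵥ (Matrix.diagonal f *ᵥ wstar + X1ᵀ *ᵥ ε1 ω) := by
      rw [hw1 ω, hy1 ω, Matrix.mulVec_add, Matrix.mulVec_mulVec, hX1X1, hG1d]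
    rw [h1]
    have h2 : (Matrix.diagonal g *ᵥ (Matrix.diagonal f *ᵥ wstar + X1ᵀ *ᵥ ε1 ω)) i
        = g i * (f i * wstar i + (X1ᵀ *ᵥ ε1 ω) i) := by
      simp [Matrix.mulVec_diagonal]
    have h3 : (X1ᵀ *ᵥ ε1 ω) i = u i ω := by
      simp only [Matrix.mulVec, dotProduct, Matrix.transpose_apply, hu]
    rw [h2, h3]
    linear_combination wstar i * hgfi
  -- normal equation for the regularized second-task solution
  have hzform : ∀ ω, ∀ i : Fin d, (i:ℕ) < 2 →
      (N⁻¹ + μ) * (w2 ω i - wstar i) = N⁻¹ * v i ω + μ * (g i * u i ω) := by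
    intro ω i hi
    set W : Fin d → ℝ := w2 ω with hW
    set S : ℝ := ∑ t, (y2 ω t - (X2 *ᵥ W) t) * X2 t i with hS
    have hineq : ∀ δ : ℝ, 0 ≤ (N⁻¹ + μ)*δ^2 + (2*μ*(W i - w1 ω i) - 2*N⁻¹*S)*δ := by
      intro δ
      have h := hw2 ω (Function.update W i (W i + δ))
      rw [← hW] at h
      have hupd : ∀ t, y2 ω t - (X2 *ᵥ Function.update W i (W i + δ)) t
          = (y2 ω t - (X2 *ᵥ W) t) - X2 t i * δ := by
        intro t
        have hmv : (X2 *ᵥ Function.update W i (W i + δ)) t = (X2 *ᵥ W) t + X2 t i * δ := by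
          simp only [Matrix.mulVec, dotProduct]
          have hterm : ∀ j, X2 t j * Function.update W i (W i + δ) j
              = X2 t j * W j + (if j = i then X2 t i * δ else 0) := by
            intro j
            rcases eq_or_ne j i with rfl | hj
            · simp [Function.update_self]; ring
            · simp [Function.update_of_ne hj, hj]
          rw [Finset.sum_congr rfl fun j _ => hterm j, Finset.sum_add_distrib,
            Finset.sum_ite_eq' Finset.univ i]
          simp
        rw [hmv]; ring
      have hsum1 : ∑ t, (y2 ω t - (X2 *ᵥ Function.update W i (W i + δ)) t)^2
          = (∑ t, (y2 ω t - (X2 *ᵥ W) t)^2) - 2*δ*S + δ^2 := by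
        rw [Finset.sum_congr rfl fun t _ => by rw [hupd t]]
        have expand : ∀ t : Fin n, ((y2 ω t - (X2 *ᵥ W) t) - X2 t i * δ)^2
            = (y2 ω t - (X2 *ᵥ W) t)^2
              + ((-(2*δ))*((y2 ω t - (X2 *ᵥ W) t) * X2 t i) + δ^2*(X2 t i)^2) := by
          intro t; ring
        rw [Finset.sum_congr rfl fun t _ => expand t, Finset.sum_add_distrib,
          Finset.sum_add_distrib, ← Finset.mul_sum, ← Finset.mul_sum, ← hS, hq2 i hi]
        ring
      have hsum2 : ∑ j, (Function.update W i (W i + δ) j - w1 ω j)^2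
          = (∑ j, (W j - w1 ω j)^2) + (2*(W i - w1 ω i)*δ + δ^2) := by
        have hterm : ∀ j, (Function.update W i (W i + δ) j - w1 ω j)^2
            = (W j - w1 ω j)^2 + (if j = i then 2*(W i - w1 ω i)*δ + δ^2 else 0) := by
          intro j
          rcases eq_or_ne j i with rfl | hj
          · simp [Function.update_self]; ring
          · simp [Function.update_of_ne hj, hj]
        rw [Finset.sum_congr rfl fun j _ => hterm j, Finset.sum_add_distrib,
          Finset.sum_ite_eq' Finset.univ i]
        simp
      rw [hsum1, hsum2] at h
      nlinarith [h]
    have hbeta := quad_coeff_zero _ _ (by positivity) hineq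
    have hSval : S = wstar i + v i ω - W i := by
      rw [hS]
      have hterm : ∀ t, (y2 ω t - (X2 *ᵥ W) t) * X2 t i
          = (X2 *ᵥ wstar) t * X2 t i + X2 t i * ε2 ω t - (X2 *ᵥ W) t * X2 t i := by
        intro t; rw [hy2 ω]; simp only [Pi.add_apply]; ring
      rw [Finset.sum_congr rfl fun t _ => hterm t, Finset.sum_sub_distrib,
        Finset.sum_add_distrib, hproj i hi wstar, hproj i hi W]
    rw [hw1i ω i hi, hSval] at hbeta
    linear_combination hbeta / 2
  -- supported-sum helper
  have hsupp : ∀ F : Fin d → ℝ, (∀ j : Fin d, ¬((j:ℕ) < 2) → F j = 0) →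
      ∑ j, F j = F i0 + F i1 := by
    intro F hF
    rw [← Finset.sum_subset (Finset.subset_univ ({i0, i1} : Finset (Fin d)))]
    · rw [Finset.sum_pair hne01]
    · intro x _ hx
      refine hF x fun hlt => hx ?_
      simp only [Finset.mem_insert, Finset.mem_singleton]
      rcases (by omega : (x:ℕ) = 0 ∨ (x:ℕ) = 1) with h | h
      · left; exact Fin.ext (by simp [h, hi0])
      · right; exact Fin.ext (by simp [h, hi1])
  set l0 : ℝ := 1 + N⁻¹ with hl0
  set l1 : ℝ := (N^2)⁻¹ + N⁻¹ with hl1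
  have hRw : ∀ w : Fin d → ℝ,
      R w = 2 + (l0*(w i0 - wstar i0)^2 + l1*(w i1 - wstar i1)^2) := by
    intro w
    rw [hR w, hH1diag, hH2diag]
    have hdot : ∀ hv' : Fin d → ℝ,
        (w - wstar) ⬝ᵥ (Matrix.diagonal hv' *ᵥ (w - wstar))
          = ∑ j, hv' j * (w j - wstar j)^2 := by
      intro hv'
      simp only [dotProduct, Matrix.mulVec_diagonal, Pi.sub_apply]
      exact Finset.sum_congr rfl fun j _ => by ring
    rw [hdot, hdot]
    have hz1 : ∀ j : Fin d, ¬((j:ℕ) < 2) →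
        (if (j:ℕ) = 0 then (1:ℝ) else if (j:ℕ) = 1 then (N^2)⁻¹ else 0)
          * (w j - wstar j)^2 = 0 := by
      intro j hj; rw [if_neg (by omega), if_neg (by omega), zero_mul]
    have hz2 : ∀ j : Fin d, ¬((j:ℕ) < 2) →
        (if (j:ℕ) < 2 then N⁻¹ else 0) * (w j - wstar j)^2 = 0 := by
      intro j hj; rw [if_neg (by omega), zero_mul]
    rw [hsupp _ hz1, hsupp _ hz2]
    simp only [hi0v, hi1v]
    norm_num [hl0, hl1]
    ring
  -- cross covariance vanishes
  have hcross : ∀ s t, ∫ ω, ε1 ω s * ε2 ω t ∂Pr = 0 := by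
    intro s t
    have hi := hindep.comp (measurable_pi_apply s) (measurable_pi_apply t)
    have h2 : ∫ ω, ε1 ω s * ε2 ω t ∂Pr
        = (∫ ω, ε1 ω s ∂Pr) * ∫ ω, ε2 ω t ∂Pr :=
      hi.integral_mul_eq_mul_integral (hint11 s).1 (hint12 t).1
    rw [h2, hmean1 s, zero_mul]
  have hccpos : (0:ℝ) < N⁻¹ + μ := by positivity
  set cc : ℝ := (N⁻¹ + μ)⁻¹ with hcc
  -- second moments of the two relevant coordinates
  have key : ∀ i : Fin d, (i:ℕ) < 2 →
      Integrable (fun ω => (w2 ω i - wstar i)^2) Pr ∧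
      ∫ ω, (w2 ω i - wstar i)^2 ∂Pr = cc^2 * ((N⁻¹)^2 + μ^2 * (g i)^2 * f i) := by
    intro i hi
    set a2 : Fin n → ℝ := fun t => N⁻¹ * X2 t i with ha2
    set a1 : Fin n → ℝ := fun t => μ * g i * X1 t i with ha1
    obtain ⟨hT1int, hT1val⟩ := bilin_sum Pr a2 a2 ε2 ε2
      (fun s t => if s = t then (1:ℝ) else 0) hint22 (fun s t => hcov2 s t)
    obtain ⟨hT3int, hT3val⟩ := bilin_sum Pr a1 a1 ε1 ε1
      (fun s t => if s = t then (1:ℝ) else 0) hint21 (fun s t => hcov1 s t)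
    obtain ⟨hT2int, hT2val⟩ := bilin_sum Pr a1 a2 ε1 ε2
      (fun _ _ => (0:ℝ)) hint2x (fun s t => hcross s t)
    have hz2 : ∀ ω, (w2 ω i - wstar i)^2
        = cc^2 * ((∑ t, a2 t * ε2 ω t) * (∑ t, a2 t * ε2 ω t)
            + 2*((∑ t, a1 t * ε1 ω t) * (∑ t, a2 t * ε2 ω t))
            + (∑ t, a1 t * ε1 ω t) * (∑ t, a1 t * ε1 ω t)) := by
      intro ω
      have h1 := hzform ω i hi
      have hva : N⁻¹ * v i ω = ∑ t, a2 t * ε2 ω t := by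
        simp only [hv, ha2, Finset.mul_sum]
        exact Finset.sum_congr rfl fun t _ => by ring
      have hub : μ * (g i * u i ω) = ∑ t, a1 t * ε1 ω t := by
        simp only [hu, ha1, Finset.mul_sum]
        exact Finset.sum_congr rfl fun t _ => by ring
      have hcc1 : cc * (N⁻¹ + μ) = 1 := inv_mul_cancel₀ (ne_of_gt hccpos)
      have hz : w2 ω i - wstar i
          = cc * (∑ t, a2 t * ε2 ω t + ∑ t, a1 t * ε1 ω t) := by
        calc w2 ω i - wstar i = cc * ((N⁻¹ + μ) * (w2 ω i - wstar i)) := by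
              rw [← mul_assoc, hcc1, one_mul]
        _ = cc * (∑ t, a2 t * ε2 ω t + ∑ t, a1 t * ε1 ω t) := by
              rw [h1, hva, hub]
      rw [hz]; ring
    have hintg : Integrable (fun ω => (w2 ω i - wstar i)^2) Pr := by
      have h : Integrable (fun ω => cc^2 * ((∑ t, a2 t * ε2 ω t) * (∑ t, a2 t * ε2 ω t)
            + 2*((∑ t, a1 t * ε1 ω t) * (∑ t, a2 t * ε2 ω t))
            + (∑ t, a1 t * ε1 ω t) * (∑ t, a1 t * ε1 ω t))) Pr :=
        ((hT1int.add (hT2int.const_mul 2)).add hT3int).const_mul _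
      exact h.congr (by filter_upwards with ω using (hz2 ω).symm)
    refine ⟨hintg, ?_⟩
    have hB2 : Integrable (fun ω => 2*((∑ t, a1 t * ε1 ω t) * (∑ t, a2 t * ε2 ω t))) Pr :=
      hT2int.const_mul 2
    have hAB : Integrable (fun ω => (∑ t, a2 t * ε2 ω t) * (∑ t, a2 t * ε2 ω t)
        + 2*((∑ t, a1 t * ε1 ω t) * (∑ t, a2 t * ε2 ω t))) Pr := hT1int.add hB2
    rw [integral_congr_ae (by filter_upwards with ω using hz2 ω),
      MeasureTheory.integral_const_mul,
      integral_add hAB hT3int,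
      integral_add hT1int hB2,
      MeasureTheory.integral_const_mul, hT1val, hT2val, hT3val,
      diag_kron_sum, diag_kron_sum]
    have hv1 : ∑ t, a2 t * a2 t = (N⁻¹)^2 := by
      have h := hq2 i hi
      calc ∑ t, a2 t * a2 t = (N⁻¹)^2 * ∑ t, (X2 t i)^2 := by
            rw [Finset.mul_sum]
            exact Finset.sum_congr rfl fun t _ => by simp only [ha2]; ring
      _ = (N⁻¹)^2 := by rw [h, mul_one]
    have hv3 : ∑ t, a1 t * a1 t = μ^2 * (g i)^2 * f i := by
      have h := hq1 i
      calc ∑ t, a1 t * a1 t = (μ^2 * (g i)^2) * ∑ t, (X1 t i)^2 := by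
            rw [Finset.mul_sum]
            exact Finset.sum_congr rfl fun t _ => by simp only [ha1]; ring
      _ = μ^2 * (g i)^2 * f i := by rw [h]
    have hv2 : ∑ s, ∑ t, a1 s * a2 t * (0:ℝ) = 0 := by simp
    rw [hv1, hv3, hv2]
    ring
  -- evaluate the two coordinates
  obtain ⟨hint0, hval0⟩ := key i0 (by rw [hi0v]; omega)
  obtain ⟨hint1, hval1⟩ := key i1 (by rw [hi1v]; omega)
  have hgi0 : g i0 = N⁻¹ := by simp [hg, hi0]
  have hgi1 : g i1 = N := by simp [hg, hi1]
  have hfi0 : f i0 = N := by simp [hf, hi0]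
  have hfi1 : f i1 = N⁻¹ := by simp [hf, hi1]
  have hfun : (fun ω => R (w2 ω)) = fun ω =>
      2 + (l0*(w2 ω i0 - wstar i0)^2 + l1*(w2 ω i1 - wstar i1)^2) := by
    funext ω; rw [hRw (w2 ω)]
  have hRint : ∫ ω, R (w2 ω) ∂Pr
      = 2 + (l0 * (cc^2*((N⁻¹)^2 + μ^2*(g i0)^2*f i0))
          + l1 * (cc^2*((N⁻¹)^2 + μ^2*(g i1)^2*f i1))) := by
    have hQ0 : Integrable (fun ω => l0*(w2 ω i0 - wstar i0)^2) Pr := hint0.const_mul l0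
    have hQ1 : Integrable (fun ω => l1*(w2 ω i1 - wstar i1)^2) Pr := hint1.const_mul l1
    have hQ01 : Integrable (fun ω => l0*(w2 ω i0 - wstar i0)^2
        + l1*(w2 ω i1 - wstar i1)^2) Pr := hQ0.add hQ1
    rw [hfun]
    rw [integral_add (integrable_const (2:ℝ)) hQ01,
      integral_add hQ0 hQ1,
      MeasureTheory.integral_const_mul, MeasureTheory.integral_const_mul, hval0, hval1,
      integral_const]
    simp [measure_univ]
  have hRstar : R wstar = 2 := by
    rw [hR]
    simp [sub_self]
    norm_num
  -- arithmetic facts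
  have hxN : N⁻¹ * N = 1 := inv_mul_cancel₀ hnne
  have hxpos : (0:ℝ) < N⁻¹ := by positivity
  have htar : μ^2/(N⁻¹+μ)^2 + (N⁻¹)^2/(N⁻¹+μ)^2 = (μ^2 + (N⁻¹)^2) * cc^2 := by
    have hD : (N⁻¹+μ) ≠ 0 := ne_of_gt hccpos
    rw [hcc]
    field_simp
  constructor
  · rw [hRint, hRstar, one_mul, htar]
    have hbr : (μ^2 + (N⁻¹)^2)
        ≤ l0 * ((N⁻¹)^2 + μ^2*(g i0)^2*f i0) + l1 * ((N⁻¹)^2 + μ^2*(g i1)^2*f i1) := by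
      rw [hgi0, hgi1, hfi0, hfi1, hl0, hl1]
      have e4 : (N^2)⁻¹ = (N⁻¹)^2 := by rw [← inv_pow]
      rw [e4]
      have hx2N2 : (N⁻¹)^2*N^2 = 1 := by
        have h : (N⁻¹)^2*N^2 = (N⁻¹*N)^2 := by ring
        rw [h, hxN, one_pow]
      have c1 : 0 ≤ μ^2*(N⁻¹)^2*N := by positivity
      have h1 : (1 + N⁻¹) * ((N⁻¹)^2 + μ^2*(N⁻¹)^2*N) ≥ (N⁻¹)^2 := by
        nlinarith [c1, hxpos, mul_nonneg hxpos.le c1, pow_pos hxpos 3]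
      have eq1 : μ^2*((N⁻¹)^2*N^2) = μ^2 := by rw [hx2N2, mul_one]
      have eq2 : μ^2*N⁻¹*((N⁻¹)^2*N^2) = μ^2*N⁻¹ := by rw [hx2N2, mul_one]
      have h2 : ((N⁻¹)^2 + N⁻¹) * ((N⁻¹)^2 + μ^2*N^2*N⁻¹) ≥ μ^2 := by
        nlinarith [eq1, eq2, pow_pos hxpos 3, pow_pos hxpos 4,
          mul_pos (mul_pos hμ hμ) hxpos, hxpos, hμ]
      linarith [h1, h2]
    nlinarith [mul_le_mul_of_nonneg_right hbr (sq_nonneg cc)]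
  · rw [one_mul, ← add_div, ge_iff_le, le_div_iff₀ (by positivity : (0:ℝ) < (N⁻¹+μ)^2)]
    nlinarith [sq_nonneg (μ - N⁻¹)]
end
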